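/- arXiv:1703.00150 — 11 statements merged into one kernel-verified Lean document; each statement's English description precedes it below -/
import Mathlib

section
/- Let R be a ring and let η be a natural endomorphism of the identity functor on the category of R-modules. If the component η_S is zero for every simple R-module S, then for every R-module M of finite length there exists m ≥ 1 such that the m-fold composite η_M ∘ ⋯ ∘ η_M of the component η_M : M → M with itself is the zero map. -/
universe u v

/-- If a natural endomorphism of the identity functor on the category of
`R`-modules vanishes on every simple module, then its component at any module of finite
length is nilpotent. -/
theorem natural_endo_nilpotent_of_zero_on_simples
    (R : Type u) [Ring R]
    (η : ∀ (M : Type v) [AddCommGroup M] [Module R M], M →ₗ[R] M)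
    (hnat : ∀ (M N : Type v) [AddCommGroup M] [Module R M] [AddCommGroup N] [Module R N]
      (h : M →ₗ[R] N), h ∘ₗ η M = η N ∘ₗ h)
    (hsimple : ∀ (S : Type v) [AddCommGroup S] [Module R S], IsSimpleModule R S → η S = 0)
    (M : Type v) [AddCommGroup M] [Module R M] (hM : IsFiniteLength R M) :
    ∃ m : ℕ, 1 ≤ m ∧ (η M) ^ m = 0 := by
  induction hM with
  | of_subsingleton =>
    exact ⟨1, le_refl 1, by ext x; exact Subsingleton.elim _ _⟩
  | @of_simple_quotient M _ _ N _ _ ih =>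
    obtain ⟨m, hm1, hm0⟩ := ih
    refine ⟨m + 1, by omega, ?_⟩
    -- η M maps M into N
    have hrange : ∀ x : M, η M x ∈ N := by
      intro x
      have h1 := hnat M (M ⧸ N) N.mkQ
      rw [hsimple (M ⧸ N) ‹_›] at h1
      have h2 := congrArg (fun f => f x) (congrArg DFunLike.coe h1)
      simp only [LinearMap.comp_apply, LinearMap.zero_comp, LinearMap.zero_apply] at h2
      exact (Submodule.Quotient.mk_eq_zero N).mp h2
    -- η M restricted to N equals η N
    have hres : ∀ y : N, η M (y : M) = ((η N y : N) : M) := by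
      intro y
      have h1 := hnat N M N.subtype
      have h2 := congrArg (fun f => f y) (congrArg DFunLike.coe h1)
      simpa using h2.symm
    have hpow : ∀ k : ℕ, ∀ y : N, ((η M) ^ k) (y : M) = (((η N) ^ k) y : N) := by
      intro k
      induction k with
      | zero => intro y; simp
      | succ k ihk =>
        intro y
        rw [pow_succ', pow_succ']
        simp only [Module.End.mul_apply]
        rw [ihk y, hres]
    ext x
    have hx : η M x ∈ N := hrange x
    rw [pow_succ]
    simp only [Module.End.mul_apply, LinearMap.zero_apply]
    have := hpow m ⟨η M x, hx⟩
    simp only [hm0, LinearMap.zero_apply] at this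
    simpa using this
end

section
/- Let k be a field and let (A, ε) be a symmetric algebra over k. Then for any two idempotents e, f ∈ A one has dim_k(eAf) = dim_k(fAe), where eAf denotes the k-linear subspace {e·a·f : a ∈ A} of A. (In particular, the Cartan matrix of A, whose (U,V)-entry is dim_k(e_U A e_V) for primitive idempotents e_U corresponding to the simple A-modules, is symmetric.) -/
universe u

lemma aux_le
    (k : Type u) (A : Type u) [Field k] [Ring A] [Algebra k A] [FiniteDimensional k A]
    (ε : A →ₗ[k] k)
    (hcentral : ∀ a b : A, ε (a * b) = ε (b * a))
    (hnondeg : ∀ a : A, (∀ b : A, ε (a * b) = 0) → a = 0)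
    (e f : A) (he : IsIdempotentElem e) (hf : IsIdempotentElem f) :
    Module.finrank k
        (LinearMap.range ((LinearMap.mulLeft k e).comp (LinearMap.mulRight k f))) ≤
      Module.finrank k
        (LinearMap.range ((LinearMap.mulLeft k f).comp (LinearMap.mulRight k e))) := by
  set V := LinearMap.range ((LinearMap.mulLeft k e).comp (LinearMap.mulRight k f)) with hV
  set W := LinearMap.range ((LinearMap.mulLeft k f).comp (LinearMap.mulRight k e)) with hW
  let Φ : V →ₗ[k] Module.Dual k W :=
    ((((LinearMap.mul k A).compl₂ W.subtype).compr₂ ε)).domRestrict V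
  have hinj : Function.Injective Φ := by
    rw [← LinearMap.ker_eq_bot]
    ext ⟨x, hx⟩
    simp only [LinearMap.mem_ker, Submodule.mem_bot, Submodule.mk_eq_zero]
    constructor
    · intro h
      obtain ⟨a, rfl⟩ := hx
      simp only [LinearMap.coe_comp, Function.comp_apply, LinearMap.mulLeft_apply,
        LinearMap.mulRight_apply] at *
      apply hnondeg
      intro b
      have hmem : f * (b * e) ∈ W := ⟨b, rfl⟩
      have h0 : ε (e * (a * f) * (f * (b * e))) = 0 := by
        have := congrArg (fun φ : Module.Dual k W => φ ⟨f * (b * e), hmem⟩) h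
        simpa [Φ] using this
      calc ε (e * (a * f) * b) = ε (a * (f * (b * e))) := by
             rw [mul_assoc, hcentral]
             simp only [mul_assoc]
           _ = ε (e * (a * f) * (f * (b * e))) := by
             rw [mul_assoc e, hcentral e]
             congr 1
             simp only [mul_assoc]
             rw [show e * e = e from he, ← mul_assoc f f, show f * f = f from hf]
           _ = 0 := h0
    · rintro rfl
      show Φ 0 = 0
      exact map_zero Φ
  have hle := LinearMap.finrank_le_finrank_of_injective hinj
  rwa [Subspace.dual_finrank_eq] at hle

/-- For a symmetric algebra `(A, ε)` over a field `k` and idempotents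
`e, f ∈ A`, the subspaces `eAf` and `fAe` have equal dimension. -/
theorem finrank_idem_sandwich_symm
    (k : Type u) (A : Type u) [Field k] [Ring A] [Algebra k A] [FiniteDimensional k A]
    (ε : A →ₗ[k] k)
    (hcentral : ∀ a b : A, ε (a * b) = ε (b * a))
    (hnondeg : ∀ a : A, (∀ b : A, ε (a * b) = 0) → a = 0)
    (e f : A) (he : IsIdempotentElem e) (hf : IsIdempotentElem f) :
    Module.finrank k
        (LinearMap.range ((LinearMap.mulLeft k e).comp (LinearMap.mulRight k f))) =
      Module.finrank k
        (LinearMap.range ((LinearMap.mulLeft k f).comp (LinearMap.mulRight k e))) :=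
  le_antisymm (aux_le k A ε hcentral hnondeg e f he hf)
    (aux_le k A ε hcentral hnondeg f e hf he)
end

section
/- Let k be an algebraically closed field and let (A, ε) be a symmetric algebra over k. Let e_1, …, e_n ∈ A be a complete set of orthogonal primitive idempotents (each e_i is a primitive idempotent, e_i·e_j = 0 for i ≠ j, and e_1 + ⋯ + e_n = 1). Then the rank of the n×n matrix over k whose (i,j)-entry is the image in k of the natural number dim_k(e_i A e_j) equals dim_k Hig(A). -/
/-!
Write `H b = Σ_l u_l b v_l`. Dual bases compute the trace of `x ↦ a x b` as `ε (a * H b)`; for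
idempotents `a = e_i`, `b = e_j` this trace is also `dim e_i A e_j`, so the Cartan matrix is the
matrix of `c ↦ (ε (e_i * H (Σ_j c_j e_j)))_i`. The trace vanishes when `a` or `b` is nilpotent,
so `H` and every functional `ε (· * H b)` kill nilpotent elements. Over an algebraically closed
field primitivity makes each `e_i x e_i` a scalar multiple of `e_i` up to a nilpotent, while
`e_i x e_j` is nilpotent for `i ≠ j`; hence every element is `Σ c_i e_i` modulo nilpotents. So `H`
has the same range on `span (e_i)` as on `A`, and `z ↦ (ε (e_i * z))_i` is injective on the
range of `H`: the Cartan matrix has rank `dim Hig(A)`.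
-/

open scoped Classical

universe u

/-- An idempotent is primitive if it is nonzero and cannot be written as the sum of two
nonzero orthogonal idempotents. -/
def IsPrimitiveIdempotent {A : Type u} [Ring A] (e : A) : Prop :=
  e ≠ 0 ∧ IsIdempotentElem e ∧
    ¬ ∃ e' e'' : A, e' ≠ 0 ∧ e'' ≠ 0 ∧ IsIdempotentElem e' ∧ IsIdempotentElem e'' ∧
        e' * e'' = 0 ∧ e'' * e' = 0 ∧ e = e' + e''

open LinearMap Polynomial

theorem LinearMap.finrank_range_comp_of_ker_eq {K V W U : Type*} [DivisionRing K]
    [AddCommGroup V] [Module K V] [AddCommGroup W] [Module K W] [AddCommGroup U] [Module K U]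
    (f : V →ₗ[K] W) (g : W →ₗ[K] U) (h : ker (g ∘ₗ f) = ker f) :
    Module.finrank K (range (g ∘ₗ f)) = Module.finrank K (range f) :=
  (((g ∘ₗ f).quotKerEquivRange.symm.trans (Submodule.quotEquivOfEq _ _ h)).trans
    f.quotKerEquivRange).finrank_eq

theorem IsPrimitiveIdempotent.mul_eq_zero_or_mul_eq_self {A : Type*} [Ring A] {e f : A}
    (he : IsPrimitiveIdempotent e) (hf : IsIdempotentElem f) (hef : Commute e f) :
    e * f = 0 ∨ e * f = e := by
  obtain ⟨-, he, hprim⟩ := he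
  set a := e * f
  have hea : e * a = a := by rw [← mul_assoc, he.eq]
  have hae : a * e = a := by rw [mul_assoc, ← hef.eq, ← mul_assoc, he.eq]
  have ha : IsIdempotentElem a := he.mul_of_commute hef hf
  by_contra! h
  refine hprim ⟨a, e - a, h.1, sub_ne_zero.2 h.2.symm, ha, ?_, ?_, ?_, (add_sub_cancel a e).symm⟩
  · rw [IsIdempotentElem, mul_sub, sub_mul, sub_mul, he.eq, hea, hae, ha.eq, sub_self, sub_zero]
  · rw [mul_sub, hae, ha.eq, sub_self]
  · rw [sub_mul, hea, ha.eq, sub_self]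

section

variable {k A : Type*} [Field k] [Ring A] [Algebra k A]

theorem aeval_mul_eq_eval_smul {y w : A} {μ : k} (h : y * w = μ • w) (p : k[X]) :
    aeval y p * w = p.eval μ • w := by
  induction p using Polynomial.induction_on with
  | C c => simp [Algebra.smul_def]
  | add p q hp hq => simp [add_mul, hp, hq, add_smul]
  | monomial n c ih =>
    rw [pow_succ, ← mul_assoc, map_mul, aeval_X, mul_assoc, h, mul_smul_comm, ih, eval_mul_X,
      smul_comm, ← mul_smul, mul_comm]

theorem trace_mulLeft_comp_mulRight_eq_zero {a b : A} (h : IsNilpotent a ∨ IsNilpotent b) :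
    trace k A ((mulLeft k a).comp (mulRight k b)) = 0 := by
  refine (isNilpotent_trace_of_isNilpotent ?_).eq_zero
  rw [← Module.End.mul_eq_comp]
  rcases h with ha | hb
  · exact (commute_mulLeft_right a b).isNilpotent_mul_right ((isNilpotent_mulLeft_iff k a).2 ha)
  · exact (commute_mulLeft_right a b).isNilpotent_mul_left ((isNilpotent_mulRight_iff k b).2 hb)

variable (k) in
def higmanMap {ι : Type*} [Fintype ι] (u v : ι → A) : A →ₗ[k] A :=
  ∑ l, (mulLeft k (u l)).comp (mulRight k (v l))

variable {ι : Type*} [Fintype ι] {ε : A →ₗ[k] k} {u : Module.Basis ι k A} {v : ι → A}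

theorem trace_mulLeft_comp_mulRight_eq_apply_mul_higmanMap
    (hdual : ∀ l m, ε (u l * v m) = if l = m then 1 else 0) (a b : A) :
    trace k A ((mulLeft k a).comp (mulRight k b)) = ε (a * higmanMap k u v b) := by
  have hrepr (x : A) (l : ι) : u.repr x l = ε (x * v l) := by
    have : u.coord l = ε ∘ₗ mulRight k (v l) :=
      u.ext fun m ↦ by simp [Finsupp.single_apply, hdual]
    exact LinearMap.congr_fun this x
  rw [trace_eq_matrix_trace k u, Matrix.trace]
  simp only [Matrix.diag_apply, toMatrix_apply, hrepr, higmanMap, LinearMap.sum_apply, comp_apply,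
    mulLeft_apply, mulRight_apply, Finset.mul_sum, map_sum, mul_assoc]

theorem apply_mul_higmanMap_eq_zero_of_isNilpotent
    (hdual : ∀ l m, ε (u l * v m) = if l = m then 1 else 0) {a b : A}
    (h : IsNilpotent a ∨ IsNilpotent b) : ε (a * higmanMap k u v b) = 0 := by
  rw [← trace_mulLeft_comp_mulRight_eq_apply_mul_higmanMap hdual,
    trace_mulLeft_comp_mulRight_eq_zero h]

theorem higmanMap_eq_zero_of_isNilpotent
    (hdual : ∀ l m, ε (u l * v m) = if l = m then 1 else 0)
    (hcentral : ∀ a b : A, ε (a * b) = ε (b * a))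
    (hnondeg : ∀ a : A, (∀ b : A, ε (a * b) = 0) → a = 0) {b : A} (hb : IsNilpotent b) :
    higmanMap k u v b = 0 :=
  hnondeg _ fun a ↦ by
    rw [hcentral]; exact apply_mul_higmanMap_eq_zero_of_isNilpotent hdual (.inr hb)

variable [FiniteDimensional k A]

theorem trace_mulLeft_comp_mulRight_eq_finrank_range {e f : A} (he : IsIdempotentElem e)
    (hf : IsIdempotentElem f) :
    trace k A ((mulLeft k e).comp (mulRight k f))
      = Module.finrank k (range ((mulLeft k e).comp (mulRight k f))) := by
  refine (IsIdempotentElem.isProj_range _ ?_).trace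
  ext x
  simp only [Module.End.mul_apply, comp_apply, mulLeft_apply, mulRight_apply]
  rw [mul_assoc, mul_assoc, hf.eq, ← mul_assoc, he.eq]

variable [IsAlgClosed k]

theorem IsIdempotentElem.exists_ne_zero_mul_eq_smul {e y : A} (he : IsIdempotentElem e)
    (he0 : e ≠ 0) (hey : e * y = y) :
    ∃ μ : k, ∃ w : A, w ≠ 0 ∧ e * w = w ∧ y * w = μ • w := by
  have : Nontrivial (range (mulLeft k e)) :=
    ⟨⟨⟨e, 1, mul_one e⟩, 0, fun h ↦ he0 (congrArg Subtype.val h)⟩⟩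
  let ψ : Module.End k (range (mulLeft k e)) :=
    (mulLeft k y).restrict fun w _ ↦ ⟨y * w, by rw [mulLeft_apply, mulLeft_apply, ← mul_assoc, hey]⟩
  obtain ⟨μ, hμ⟩ := Module.End.exists_eigenvalue ψ
  obtain ⟨⟨w, x, rfl⟩, hw⟩ := hμ.exists_hasEigenvector
  exact ⟨μ, e * x, by simpa using hw.2, he.mul_self_mul x,
    congrArg Subtype.val hw.apply_eq_smul⟩

theorem IsPrimitiveIdempotent.exists_isNilpotent_sub_smul {e y : A}
    (he : IsPrimitiveIdempotent e) (hey : e * y = y) (hye : y * e = y) :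
    ∃ μ : k, IsNilpotent (y - μ • e) := by
  -- `μ` is an eigenvalue of `y` on `eA`. Bézout for `minpoly y = (X - μ)^m Q` gives an idempotent
  -- `f = (b Q)(y)` commuting with `e`; `e f = 0` would kill the eigenvector, so `e f = e`.
  obtain ⟨μ, w, hw0, hew, hyw⟩ := he.2.1.exists_ne_zero_mul_eq_smul (k := k) he.1 hey
  set P := minpoly k y
  have hP : P ≠ 0 := minpoly.ne_zero (Algebra.IsIntegral.isIntegral y)
  obtain ⟨Q, hPQ, hQ⟩ := P.exists_eq_pow_rootMultiplicity_mul_and_not_dvd hP μ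
  set m := P.rootMultiplicity μ
  have hm : 0 < m := by
    have := aeval_mul_eq_eval_smul hyw P
    rw [minpoly.aeval, zero_mul, eq_comm, smul_eq_zero] at this
    exact (rootMultiplicity_pos hP).2 (this.resolve_right hw0)
  obtain ⟨a, b, hab⟩ : IsCoprime ((X - C μ) ^ m) Q :=
    ((irreducible_X_sub_C μ).coprime_iff_not_dvd.2 hQ).pow_left
  set f := aeval y (b * Q)
  have hf₁ : 1 - f = aeval y (a * (X - C μ) ^ m) := by
    rw [sub_eq_iff_eq_add, ← map_add, hab, map_one]
  have hcomm (p : k[X]) : Commute e (aeval y p) :=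
    Algebra.commute_of_mem_adjoin_singleton_of_commute (aeval_mem_adjoin_singleton k y)
      (hey.trans hye.symm)
  have hf : IsIdempotentElem f := by
    have : f * (1 - f) = 0 := by
      rw [hf₁, ← map_mul, show b * Q * (a * (X - C μ) ^ m) = a * b * P by rw [hPQ]; ring,
        map_mul, minpoly.aeval, mul_zero]
    rwa [mul_sub, mul_one, sub_eq_zero, eq_comm] at this
  rcases he.mul_eq_zero_or_mul_eq_self hf (hcomm _) with h | h
  · refine absurd ?_ hw0
    calc w = e * ((1 - f) * w) := by rw [← mul_assoc, mul_sub, h, sub_zero, mul_one, hew]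
      _ = 0 := by rw [hf₁, aeval_mul_eq_eval_smul hyw]; simp [hm.ne']
  · refine ⟨μ, m, ?_⟩
    calc (y - μ • e) ^ m = (aeval y (X - C μ) * e) ^ m := by
          rw [map_sub, aeval_X, aeval_C, sub_mul, hye, Algebra.smul_def]
      _ = aeval y ((X - C μ) ^ m) * (f * e) := by
          rw [(hcomm _).symm.mul_pow, he.2.1.pow_eq hm.ne', map_pow, ← (hcomm _).eq, h]
      _ = aeval y (b * P) * e := by rw [← mul_assoc, ← map_mul, hPQ, mul_left_comm]
      _ = 0 := by rw [map_mul, minpoly.aeval, mul_zero, zero_mul]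

variable {σ : Type*} [Fintype σ] {e : σ → A}

theorem exists_sub_sum_smul_mem_span_isNilpotent (hprim : ∀ i, IsPrimitiveIdempotent (e i))
    (horth : ∀ i j, i ≠ j → e i * e j = 0) (hsum : ∑ i, e i = 1) (b : A) :
    ∃ c : σ → k, b - ∑ i, c i • e i ∈ Submodule.span k {x : A | IsNilpotent x} := by
  have hidem i : IsIdempotentElem (e i) := (hprim i).2.1
  choose c hc using fun i ↦ (hprim i).exists_isNilpotent_sub_smul (k := k) (y := e i * b * e i)
    (by rw [← mul_assoc, ← mul_assoc, (hidem i).eq]) (by rw [mul_assoc, (hidem i).eq])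
  refine ⟨c, ?_⟩
  have hb : b - ∑ i, c i • e i
      = ∑ i, ∑ j, (e i * b * e j - if i = j then c i • e i else 0) := by
    simp only [Finset.sum_sub_distrib, Finset.sum_ite_eq, Finset.mem_univ, if_true,
      ← Finset.mul_sum, ← Finset.sum_mul, hsum, one_mul, mul_one]
  rw [hb]
  refine Submodule.sum_mem _ fun i _ ↦ Submodule.sum_mem _ fun j _ ↦ Submodule.subset_span ?_
  by_cases hij : i = j
  · subst hij
    simpa using hc i
  · refine ⟨2, ?_⟩
    rw [if_neg hij, sub_zero, sq, mul_assoc, ← mul_assoc (e j), ← mul_assoc (e j),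
      horth j i (Ne.symm hij), zero_mul, zero_mul, mul_zero]

theorem range_higmanMap_comp_linearCombination
    (hdual : ∀ l m, ε (u l * v m) = if l = m then 1 else 0)
    (hcentral : ∀ a b : A, ε (a * b) = ε (b * a))
    (hnondeg : ∀ a : A, (∀ b : A, ε (a * b) = 0) → a = 0)
    (hprim : ∀ i, IsPrimitiveIdempotent (e i)) (horth : ∀ i j, i ≠ j → e i * e j = 0)
    (hsum : ∑ i, e i = 1) :
    range (higmanMap k u v ∘ₗ Fintype.linearCombination k e) = range (higmanMap k u v) := by
  refine le_antisymm (range_comp_le_range _ _) ?_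
  rintro _ ⟨b, rfl⟩
  obtain ⟨c, hc⟩ := exists_sub_sum_smul_mem_span_isNilpotent (k := k) hprim horth hsum b
  have hker : Submodule.span k {x : A | IsNilpotent x} ≤ ker (higmanMap k u v) :=
    Submodule.span_le.2 fun x hx ↦ higmanMap_eq_zero_of_isNilpotent hdual hcentral hnondeg hx
  refine ⟨c, ?_⟩
  rw [comp_apply, Fintype.linearCombination_apply, eq_comm, ← sub_eq_zero, ← map_sub]
  exact hker hc

theorem ker_pi_comp_higmanMap
    (hdual : ∀ l m, ε (u l * v m) = if l = m then 1 else 0)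
    (hcentral : ∀ a b : A, ε (a * b) = ε (b * a))
    (hnondeg : ∀ a : A, (∀ b : A, ε (a * b) = 0) → a = 0)
    (hprim : ∀ i, IsPrimitiveIdempotent (e i)) (horth : ∀ i j, i ≠ j → e i * e j = 0)
    (hsum : ∑ i, e i = 1) :
    ker ((LinearMap.pi fun i ↦ ε ∘ₗ mulLeft k (e i)) ∘ₗ higmanMap k u v)
      = ker (higmanMap k u v) := by
  refine le_antisymm (fun b hb ↦ hnondeg _ fun a ↦ ?_) (ker_le_ker_comp _ _)
  obtain ⟨c, hc⟩ := exists_sub_sum_smul_mem_span_isNilpotent (k := k) hprim horth hsum a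
  have hker : Submodule.span k {x : A | IsNilpotent x}
      ≤ ker (ε ∘ₗ mulRight k (higmanMap k u v b)) :=
    Submodule.span_le.2 fun x hx ↦ apply_mul_higmanMap_eq_zero_of_isNilpotent hdual (.inl hx)
  have hb' (i : σ) : ε (e i * higmanMap k u v b) = 0 := congrFun hb i
  rw [hcentral]
  simpa [sub_mul, Finset.sum_mul, hb'] using hker hc

end

/-- For a symmetric algebra `(A, ε)` over an algebraically closed field `k`
with a complete set `e₁, …, eₙ` of orthogonal primitive idempotents, the rank of the `n × n`
matrix over `k` whose `(i,j)` entry is the image in `k` of `dim_k (eᵢ A eⱼ)` equals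
`dim_k Hig(A)`, where the Higman ideal `Hig(A)` is `{Σ_l uₗ a vₗ : a ∈ A}` for (any) pair of
dual bases `(uₗ), (vₗ)` of `A` with respect to `ε`. -/
theorem rank_cartan_eq_finrank_higman
    (k : Type u) (A : Type u) [Field k] [IsAlgClosed k] [Ring A] [Algebra k A]
    [FiniteDimensional k A]
    (ε : A →ₗ[k] k)
    (hcentral : ∀ a b : A, ε (a * b) = ε (b * a))
    (hnondeg : ∀ a : A, (∀ b : A, ε (a * b) = 0) → a = 0)
    (n : ℕ) (e : Fin n → A)
    (hprim : ∀ i, IsPrimitiveIdempotent (e i))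
    (horth : ∀ i j, i ≠ j → e i * e j = 0)
    (hsum : ∑ i, e i = 1)
    (ι : Type u) [Fintype ι] (u v : Module.Basis ι k A)
    (hdual : ∀ l m, ε (u l * v m) = if l = m then 1 else 0) :
    (Matrix.of fun i j : Fin n =>
        ((Module.finrank k
            (LinearMap.range
              ((LinearMap.mulLeft k (e i)).comp (LinearMap.mulRight k (e j)))) : ℕ) : k)).rank
      = Module.finrank k
          (LinearMap.range
            (∑ l, (LinearMap.mulLeft k (u l)).comp (LinearMap.mulRight k (v l)))) := by
  set ev : A →ₗ[k] Fin n → k := LinearMap.pi fun i ↦ ε ∘ₗ mulLeft k (e i)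
  have hcartan : Matrix.of (fun i j : Fin n ↦ ((Module.finrank k
        (range ((mulLeft k (e i)).comp (mulRight k (e j)))) : ℕ) : k))
      = toMatrix' (ev ∘ₗ higmanMap k u v ∘ₗ Fintype.linearCombination k e) := by
    ext i j
    simp [ev, toMatrix'_apply, Fintype.linearCombination_apply_single,
      ← trace_mulLeft_comp_mulRight_eq_finrank_range (hprim i).2.1 (hprim j).2.1,
      trace_mulLeft_comp_mulRight_eq_apply_mul_higmanMap hdual]
  rw [Matrix.rank, hcartan, ← Matrix.toLin'_apply', Matrix.toLin'_toMatrix', range_comp,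
    range_higmanMap_comp_linearCombination hdual hcentral hnondeg hprim horth hsum,
    ← range_comp, finrank_range_comp_of_ker_eq _ _
      (ker_pi_comp_higmanMap hdual hcentral hnondeg hprim horth hsum)]
  rfl
end

section
/- Let k be a field and let K be a k-linear additive category all of whose Hom-spaces are finite-dimensional over k. Let (t_M)_{M ∈ K} be a Calabi–Yau family of traces on K. Then the map sending an invertible natural endomorphism η of the identity functor of K to the family (f ↦ t_M(η_M ∘ f))_{M ∈ K} is a bijection from the set of invertible natural endomorphisms of the identity functor onto the set of all Calabi–Yau families of traces on K. -/
universe v u w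

open CategoryTheory

/-- A family of traces on a `k`-linear category is Calabi–Yau if it is cyclic and the induced
pairings on Hom-spaces are nondegenerate. -/
def IsCYFamily (k : Type w) [Field k] (K : Type u) [Category.{v} K] [Preadditive K]
    [Linear k K] (t : ∀ M : K, (M ⟶ M) →ₗ[k] k) : Prop :=
  (∀ (M N : K) (f : M ⟶ N) (g : N ⟶ M), t M (f ≫ g) = t N (g ≫ f)) ∧
  (∀ (M N : K) (f : M ⟶ N), f ≠ 0 → ∃ g : N ⟶ M, t N (g ≫ f) ≠ 0) ∧
  (∀ (M N : K) (g : N ⟶ M), g ≠ 0 → ∃ f : M ⟶ N, t N (g ≫ f) ≠ 0)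

section Aux

variable (k : Type w) [Field k] (K : Type u) [Category.{v} K] [Preadditive K] [Linear k K]
variable {k K}

/-- Separation: if `t` is CY and two parallel morphisms pair equally against everything,
they are equal. -/
lemma IsCYFamily.sep {t : ∀ M : K, (M ⟶ M) →ₗ[k] k} (ht : IsCYFamily k K t)
    {M N : K} (a b : M ⟶ N) (h : ∀ g : N ⟶ M, t N (g ≫ a) = t N (g ≫ b)) : a = b := by
  by_contra hne
  have hne' : a - b ≠ 0 := sub_ne_zero.mpr hne
  obtain ⟨g, hg⟩ := ht.2.1 M N (a - b) hne'
  apply hg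
  have : g ≫ (a - b) = g ≫ a - g ≫ b := by simp [Preadditive.comp_sub]
  rw [this, map_sub, h g, sub_self]

/-- Representability: any other CY family is obtained by pairing against some endomorphism. -/
lemma IsCYFamily.exists_rep [∀ M N : K, FiniteDimensional k (M ⟶ N)]
    {t : ∀ M : K, (M ⟶ M) →ₗ[k] k} (ht : IsCYFamily k K t)
    (φ : (M : K) → (M ⟶ M) →ₗ[k] k) (M : K) :
    ∃ e : M ⟶ M, ∀ f : M ⟶ M, φ M f = t M (f ≫ e) := by
  let T : (M ⟶ M) →ₗ[k] Module.Dual k (M ⟶ M) :=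
    { toFun := fun g => (t M).comp (Linear.rightComp k M g)
      map_add' := by
        intro g g'; ext f
        simp [Preadditive.comp_add]
      map_smul' := by
        intro c g; ext f
        simp [Linear.comp_smul] }
  have hinj : Function.Injective T := by
    rw [injective_iff_map_eq_zero]
    intro g hg
    by_contra hne
    obtain ⟨f, hf⟩ := ht.2.2 M M g hne
    apply hf
    have h0 : t M (f ≫ g) = 0 := by
      have := congrFun (congrArg (fun (ψ : Module.Dual k (M ⟶ M)) => (ψ : (M ⟶ M) → k)) hg) f
      simpa [T] using this
    rw [ht.1 M M g f, h0]
  have hsurj : Function.Surjective T :=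
    (LinearMap.injective_iff_surjective_of_finrank_eq_finrank
      (Subspace.dual_finrank_eq (K := k) (V := (M ⟶ M))).symm).mp hinj
  obtain ⟨e, he⟩ := hsurj (φ M)
  exact ⟨e, fun f => by
    have := congrFun (congrArg (fun (ψ : Module.Dual k (M ⟶ M)) => (ψ : (M ⟶ M) → k)) he) f
    simpa [T] using this.symm⟩

end Aux

/-- Let `K` be a `k`-linear additive category with finite-dimensional
Hom-spaces, equipped with a Calabi–Yau family of traces `t`. Then `η ↦ (f ↦ t_M (η_M ∘ f))`
is a bijection from invertible natural endomorphisms of the identity functor onto the set of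
all Calabi–Yau families of traces on `K`. -/
theorem cy_traces_bijection
    (k : Type w) [Field k] (K : Type u) [Category.{v} K] [Preadditive K] [Linear k K]
    [Limits.HasFiniteBiproducts K]
    [∀ M N : K, FiniteDimensional k (M ⟶ N)]
    (t : ∀ M : K, (M ⟶ M) →ₗ[k] k) (ht : IsCYFamily k K t) :
    (∀ η : 𝟭 K ⟶ 𝟭 K, (∀ M : K, IsIso (η.app M)) →
        IsCYFamily k K (fun M => (t M).comp (Linear.rightComp k M (η.app M)))) ∧
    (∀ η η' : 𝟭 K ⟶ 𝟭 K, (∀ M : K, IsIso (η.app M)) → (∀ M : K, IsIso (η'.app M)) →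
        (fun M : K => (t M).comp (Linear.rightComp k M (η.app M))) =
          (fun M : K => (t M).comp (Linear.rightComp k M (η'.app M))) → η = η') ∧
    (∀ t' : ∀ M : K, (M ⟶ M) →ₗ[k] k, IsCYFamily k K t' →
        ∃ η : 𝟭 K ⟶ 𝟭 K, (∀ M : K, IsIso (η.app M)) ∧
          t' = fun M : K => (t M).comp (Linear.rightComp k M (η.app M))) := by
  obtain ⟨hc, hnd1, hnd2⟩ := ht
  have ht : IsCYFamily k K t := ⟨hc, hnd1, hnd2⟩
  refine ⟨?_, ?_, ?_⟩
  · -- the map is well-defined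
    intro η hη
    have hnat : ∀ {M N : K} (f : M ⟶ N), f ≫ η.app N = η.app M ≫ f := by
      intro M N f
      simpa using η.naturality f
    refine ⟨?_, ?_, ?_⟩
    · intro M N f g
      simp only [LinearMap.coe_comp, Function.comp_apply, Linear.rightComp_apply]
      rw [Category.assoc, Category.assoc, hnat f,
        hc M N f (g ≫ η.app M), Category.assoc]
    · intro M N f hf
      have hf' : f ≫ η.app N ≠ 0 := by
        intro h0
        apply hf
        have := congrArg (fun x => x ≫ inv (η.app N)) h0
        simpa using this
      obtain ⟨g, hg⟩ := hnd1 M N (f ≫ η.app N) hf'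
      exact ⟨g, by simpa using hg⟩
    · intro M N g hg
      obtain ⟨f, hf⟩ := hnd2 M N g hg
      refine ⟨f ≫ inv (η.app N), ?_⟩
      simpa using hf
  · -- injectivity
    intro η η' hη hη' h
    ext M
    refine ht.sep (η.app M) (η'.app M) fun g => ?_
    have := congrFun (congrArg (fun (ψ : (N : K) → (N ⟶ N) →ₗ[k] k) => (ψ M : (M ⟶ M) → k)) h) g
    simpa using this
  · -- surjectivity
    intro t' ht'
    choose e he using ht.exists_rep t'
    have hnat : ∀ {M N : K} (h : M ⟶ N), h ≫ e N = e M ≫ h := by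
      intro M N h
      refine ht.sep (h ≫ e N) (e M ≫ h) fun g => ?_
      have h1 : t N (g ≫ h ≫ e N) = t' N (g ≫ h) := by
        rw [← Category.assoc]; exact (he N (g ≫ h)).symm
      have h2 : t N (g ≫ e M ≫ h) = t' N (g ≫ h) := by
        rw [← Category.assoc, hc N M (g ≫ e M) h, ← Category.assoc, ← he M (h ≫ g),
          ht'.1 M N h g]
      rw [h1, h2]
    refine ⟨{ app := e, naturality := fun M N h => by simpa using hnat h }, ?_, ?_⟩
    · intro M
      -- right multiplication by `e M` is injective
      have hR : Function.Injective (Linear.rightComp k M (e M) : (M ⟶ M) →ₗ[k] (M ⟶ M)) := by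
        rw [injective_iff_map_eq_zero]
        intro f hf
        by_contra hne
        obtain ⟨g, hg⟩ := ht'.2.1 M M f hne
        apply hg
        rw [he M (g ≫ f), Category.assoc]
        simp only [Linear.rightComp_apply] at hf
        rw [hf]
        simp
      have hL : Function.Injective (Linear.leftComp k M (e M) : (M ⟶ M) →ₗ[k] (M ⟶ M)) := by
        rw [injective_iff_map_eq_zero]
        intro f hf
        by_contra hne
        obtain ⟨g, hg⟩ := ht'.2.2 M M f hne
        apply hg
        simp only [Linear.leftComp_apply] at hf
        rw [he M (f ≫ g), hc M M (f ≫ g) (e M), ← Category.assoc, hf]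
        simp
      obtain ⟨l, hl⟩ := (LinearMap.injective_iff_surjective).mp hR (𝟙 M)
      obtain ⟨r, hr⟩ := (LinearMap.injective_iff_surjective).mp hL (𝟙 M)
      simp only [Linear.rightComp_apply] at hl
      simp only [Linear.leftComp_apply] at hr
      have hlr : l = r := by
        calc l = l ≫ (e M ≫ r) := by rw [hr]; simp
          _ = (l ≫ e M) ≫ r := by rw [Category.assoc]
          _ = r := by rw [hl]; simp
      exact ⟨r, hr, hlr ▸ hl⟩
    · funext M
      ext f
      simpa using he M f
end

section
/- Let 𝒜 be an abelian category with enough projectives. Then the restriction map from natural endomorphisms of the identity functor of 𝒜 to natural endomorphisms of the identity functor of the full subcategory of projective objects of 𝒜 (sending η to the family of its components at projective objects) is bijective. -/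
/-!
A natural endomorphism `θ` of the identity of the projectives extends uniquely. Uniqueness:
every object `M` receives an epimorphism `π : P ⟶ M` from a projective, and
`π ≫ η_M = η_P ≫ π`. Existence: `θ_P ≫ π` vanishes on `ker π`, because `ker π` is itself
covered by a projective `Q` and naturality of `θ` along `Q ⟶ P` moves `θ` past the composite
`Q ⟶ ker π ⟶ P ⟶ M`, which is zero; so `θ_P ≫ π` descends along `π` to `η_M`. The extension
satisfies `f ≫ η_M = θ_P ≫ f` for every `f : P ⟶ M` with `P` projective (lift `f` through
`π`), which yields naturality and `η_P = θ_P` at once.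
-/

universe v u

open CategoryTheory Limits

namespace CategoryTheory

variable {C : Type u} [Category.{v} C]

namespace ObjectProperty

variable (P : ObjectProperty C)

def restrictIdEnd (η : 𝟭 C ⟶ 𝟭 C) : 𝟭 P.FullSubcategory ⟶ 𝟭 P.FullSubcategory where
  app X := homMk (η.app X.obj)
  naturality _ _ f := hom_ext _ (η.naturality f.hom)

variable {P}

lemma idEnd_app_hom_naturality (θ : 𝟭 P.FullSubcategory ⟶ 𝟭 P.FullSubcategory) {X Y : C}
    (hX : P X) (hY : P Y) (f : X ⟶ Y) :
    f ≫ (θ.app ⟨Y, hY⟩).hom = (θ.app ⟨X, hX⟩).hom ≫ f :=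
  congrArg InducedCategory.Hom.hom (θ.naturality (X := ⟨X, hX⟩) (Y := ⟨Y, hY⟩) (homMk f))

end ObjectProperty

open ObjectProperty
open CategoryTheory.Projective (π factorThru factorThru_comp projective_over)

lemma restrictIdEnd_isProjective_injective [EnoughProjectives C] :
    Function.Injective (isProjective C).restrictIdEnd := by
  intro η η' h
  ext M
  have h_over : η.app (Projective.over M) = η'.app (Projective.over M) :=
    congrArg (fun θ => (θ.app ⟨Projective.over M, projective_over M⟩).hom) h
  have h := η.naturality (π M)
  have h' := η'.naturality (π M)
  simp only [Functor.id_obj, Functor.id_map] at h h'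
  rw [← cancel_epi (π M), h, h', h_over]

namespace Abelian

variable [Abelian C] [EnoughProjectives C]
  (θ : 𝟭 (isProjective C).FullSubcategory ⟶ 𝟭 (isProjective C).FullSubcategory)

lemma kernel_ι_comp_app_over_comp_π (M : C) :
    kernel.ι (π M) ≫ (θ.app ⟨Projective.over M, projective_over M⟩).hom ≫ π M = 0 := by
  rw [← cancel_epi (π (kernel (π M))), comp_zero, ← Category.assoc, ← Category.assoc,
    idEnd_app_hom_naturality θ (projective_over _) (projective_over M), Category.assoc,
    Category.assoc, kernel.condition, comp_zero, comp_zero]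

noncomputable def extendIdEndAppOfProjectives (M : C) : M ⟶ M :=
  epiDesc (π M) _ (kernel_ι_comp_app_over_comp_π θ M)

lemma comp_extendIdEndAppOfProjectives {X M : C} (hX : Projective X) (f : X ⟶ M) :
    f ≫ extendIdEndAppOfProjectives θ M = (θ.app ⟨X, hX⟩).hom ≫ f := by
  have hlift : factorThru f (π M) ≫ π M = f := factorThru_comp _ _
  calc f ≫ extendIdEndAppOfProjectives θ M
      = factorThru f (π M) ≫ π M ≫ extendIdEndAppOfProjectives θ M := by
        rw [← Category.assoc, hlift]
    _ = factorThru f (π M) ≫ (θ.app ⟨Projective.over M, projective_over M⟩).hom ≫ π M :=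
        by rw [extendIdEndAppOfProjectives, comp_epiDesc]
    _ = (θ.app ⟨X, hX⟩).hom ≫ f := by
        rw [← Category.assoc, idEnd_app_hom_naturality θ hX (projective_over M),
          Category.assoc, hlift]

noncomputable def extendIdEndOfProjectives : 𝟭 C ⟶ 𝟭 C where
  app := extendIdEndAppOfProjectives θ
  naturality M N f := by
    rw [← cancel_epi (π M)]
    simp only [Functor.id_map, Functor.id_obj]
    rw [← Category.assoc, ← Category.assoc,
      comp_extendIdEndAppOfProjectives θ (projective_over M) (π M ≫ f),
      comp_extendIdEndAppOfProjectives θ (projective_over M) (π M),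
      Category.assoc]

lemma restrictIdEnd_extendIdEndOfProjectives :
    (isProjective C).restrictIdEnd (extendIdEndOfProjectives θ) = θ := by
  ext X
  have h := comp_extendIdEndAppOfProjectives θ X.property (𝟙 X.obj)
  simp only [Functor.id_obj, Category.id_comp, Category.comp_id] at h
  exact h

end Abelian

lemma restrictIdEnd_isProjective_bijective [Abelian C] [EnoughProjectives C] :
    Function.Bijective (isProjective C).restrictIdEnd :=
  ⟨restrictIdEnd_isProjective_injective, fun θ =>
    ⟨Abelian.extendIdEndOfProjectives θ, Abelian.restrictIdEnd_extendIdEndOfProjectives θ⟩⟩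

end CategoryTheory

/-- For an abelian category with enough projectives, restriction gives a
bijection between natural endomorphisms of the identity functor and natural endomorphisms of
the identity functor of the full subcategory of projective objects. -/
theorem natEndo_restriction_to_projectives_bijective
    (𝒜 : Type u) [Category.{v} 𝒜] [Abelian 𝒜] [EnoughProjectives 𝒜] :
    Function.Bijective
      (fun η : (𝟭 𝒜 ⟶ 𝟭 𝒜) =>
        ({ app := fun P => ObjectProperty.homMk (η.app P.obj),
           naturality := fun P Q f => ObjectProperty.hom_ext _ (η.naturality f.hom) } :
          𝟭 (ObjectProperty.FullSubcategory fun X : 𝒜 => Projective X) ⟶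
            𝟭 (ObjectProperty.FullSubcategory fun X : 𝒜 => Projective X))) :=
  restrictIdEnd_isProjective_bijective
end

section
/- Let k be an algebraically closed field and A a finite-dimensional k-algebra. Then A admits a k-linear form ε : A → k which is central (ε(ab) = ε(ba) for all a, b) and nondegenerate (ε(ab) = 0 for all b implies a = 0) if and only if there exists a Calabi–Yau family of traces on the finitely generated projective right A-modules. -/
universe u

/-- A bundled finitely generated projective right `A`-module (with compatible `k`-action). -/
structure FGProj (k A : Type u) [Field k] [Ring A] [Algebra k A] : Type (u + 1) where
  carrier : Type u
  [isAddCommGroup : AddCommGroup carrier]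
  [isModuleK : Module k carrier]
  [isModuleA : Module Aᵐᵒᵖ carrier]
  [isTower : IsScalarTower k Aᵐᵒᵖ carrier]
  [isFinite : Module.Finite Aᵐᵒᵖ carrier]
  [isProjective : Module.Projective Aᵐᵒᵖ carrier]

attribute [instance] FGProj.isAddCommGroup FGProj.isModuleK FGProj.isModuleA
  FGProj.isTower FGProj.isFinite FGProj.isProjective

instance (k A : Type u) [Field k] [Ring A] [Algebra k A] : CoeSort (FGProj k A) (Type u) :=
  ⟨FGProj.carrier⟩

/-- A Calabi–Yau family of traces on the finitely generated projective right `A`-modules. -/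
structure CYTraces (k A : Type u) [Field k] [Ring A] [Algebra k A] : Type (u + 1) where
  t : ∀ P : FGProj k A, ((P : Type u) →ₗ[Aᵐᵒᵖ] P) →ₗ[k] k
  cyclic : ∀ (P Q : FGProj k A) (f : (P : Type u) →ₗ[Aᵐᵒᵖ] Q) (g : (Q : Type u) →ₗ[Aᵐᵒᵖ] P),
    t P (g ∘ₗ f) = t Q (f ∘ₗ g)
  nondeg_left : ∀ (P Q : FGProj k A) (f : (P : Type u) →ₗ[Aᵐᵒᵖ] Q), f ≠ 0 →
    ∃ g : (Q : Type u) →ₗ[Aᵐᵒᵖ] P, t Q (f ∘ₗ g) ≠ 0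
  nondeg_right : ∀ (P Q : FGProj k A) (g : (Q : Type u) →ₗ[Aᵐᵒᵖ] P), g ≠ 0 →
    ∃ f : (P : Type u) →ₗ[Aᵐᵒᵖ] Q, t Q (f ∘ₗ g) ≠ 0

/-! ### Auxiliary lemmas over a general (noncommutative) ring -/

section Aux

variable {k R : Type u} [Field k] [Ring R] [Algebra k R]

theorem CYaux.apply_eq_sum_pi {n m : ℕ} (w : (Fin n → R) →ₗ[R] (Fin m → R)) (x : Fin n → R) :
    w x = ∑ i, x i • w (Pi.single i 1) := by
  have hx : x = ∑ i, x i • (Pi.single i 1 : Fin n → R) := by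
    funext j
    simp [Pi.single_apply, Finset.sum_apply, mul_ite, Finset.sum_ite_eq]
  conv_lhs => rw [hx]
  rw [map_sum]
  exact Finset.sum_congr rfl fun i _ => by rw [map_smul]

/-- The trace of an endomorphism of a free module, paired with a linear form. -/
noncomputable def CYaux.freeTr (ε : R →ₗ[k] k) {n : ℕ}
    (u : (Fin n → R) →ₗ[R] (Fin n → R)) : k :=
  ε (∑ i, u (Pi.single i 1) i)

theorem CYaux.freeTr_comm (ε : R →ₗ[k] k) (hc : ∀ a b : R, ε (a * b) = ε (b * a)) {n m : ℕ}
    (u : (Fin n → R) →ₗ[R] (Fin m → R)) (v : (Fin m → R) →ₗ[R] (Fin n → R)) :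
    CYaux.freeTr ε (v ∘ₗ u) = CYaux.freeTr ε (u ∘ₗ v) := by
  have h1 : ∀ i, (v ∘ₗ u) (Pi.single i 1) i
      = ∑ j, u (Pi.single i 1) j * v (Pi.single j 1) i := by
    intro i
    rw [LinearMap.comp_apply, CYaux.apply_eq_sum_pi v (u (Pi.single i 1))]
    simp [Finset.sum_apply]
  have h2 : ∀ j, (u ∘ₗ v) (Pi.single j 1) j
      = ∑ i, v (Pi.single j 1) i * u (Pi.single i 1) j := by
    intro j
    rw [LinearMap.comp_apply, CYaux.apply_eq_sum_pi u (v (Pi.single j 1))]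
    simp [Finset.sum_apply]
  unfold CYaux.freeTr
  rw [Finset.sum_congr rfl fun i _ => h1 i, Finset.sum_congr rfl fun j _ => h2 j,
    map_sum, map_sum]
  simp_rw [map_sum]
  rw [Finset.sum_comm]
  exact Finset.sum_congr rfl fun j _ => Finset.sum_congr rfl fun i _ => hc _ _

theorem CYaux.freeTr_add (ε : R →ₗ[k] k) {n : ℕ}
    (u v : (Fin n → R) →ₗ[R] (Fin n → R)) :
    CYaux.freeTr ε (u + v) = CYaux.freeTr ε u + CYaux.freeTr ε v := by
  unfold CYaux.freeTr
  rw [← map_add, ← Finset.sum_add_distrib]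
  congr 1

theorem CYaux.freeTr_smul (ε : R →ₗ[k] k) {n : ℕ} (c : k)
    (u : (Fin n → R) →ₗ[R] (Fin n → R)) :
    CYaux.freeTr ε (c • u) = c * CYaux.freeTr ε u := by
  unfold CYaux.freeTr
  have h : (∑ i, (c • u) (Pi.single i 1) i) = c • ∑ i, u (Pi.single i 1) i := by
    rw [Finset.smul_sum]
    exact Finset.sum_congr rfl fun i _ => by simp
  rw [h, map_smul, smul_eq_mul]

theorem CYaux.exists_pres (P : Type u) [AddCommGroup P] [Module R P] [Module.Finite R P]
    [Module.Projective R P] :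
    ∃ (n : ℕ) (ι : P →ₗ[R] (Fin n → R)) (π : (Fin n → R) →ₗ[R] P), ∀ x, π (ι x) = x := by
  obtain ⟨n, π, hπ⟩ := Module.Finite.exists_fin' R P
  obtain ⟨ι, hι⟩ := Module.projective_lifting_property π LinearMap.id hπ
  exact ⟨n, ι, π, fun x => by simpa using LinearMap.ext_iff.mp hι x⟩

theorem CYaux.freeTr_conj_cyclic (ε : R →ₗ[k] k) (hc : ∀ a b : R, ε (a * b) = ε (b * a))
    {P Q : Type u} [AddCommGroup P] [Module R P] [AddCommGroup Q] [Module R Q]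
    {nP nQ : ℕ} (ιP : P →ₗ[R] (Fin nP → R)) (πP : (Fin nP → R) →ₗ[R] P)
    (hP : ∀ x, πP (ιP x) = x)
    (ιQ : Q →ₗ[R] (Fin nQ → R)) (πQ : (Fin nQ → R) →ₗ[R] Q) (hQ : ∀ x, πQ (ιQ x) = x)
    (f : P →ₗ[R] Q) (g : Q →ₗ[R] P) :
    CYaux.freeTr ε (ιP ∘ₗ (g ∘ₗ f) ∘ₗ πP) = CYaux.freeTr ε (ιQ ∘ₗ (f ∘ₗ g) ∘ₗ πQ) := by
  have e1 : ιP ∘ₗ (g ∘ₗ f) ∘ₗ πP = (ιP ∘ₗ g ∘ₗ πQ) ∘ₗ (ιQ ∘ₗ f ∘ₗ πP) := by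
    refine LinearMap.ext fun x => ?_
    simp [hQ]
  have e2 : (ιQ ∘ₗ f ∘ₗ πP) ∘ₗ (ιP ∘ₗ g ∘ₗ πQ) = ιQ ∘ₗ (f ∘ₗ g) ∘ₗ πQ := by
    refine LinearMap.ext fun x => ?_
    simp [hP]
  rw [e1, CYaux.freeTr_comm ε hc, e2]

theorem CYaux.freeTr_nondeg (ε : R →ₗ[k] k) (hc : ∀ a b : R, ε (a * b) = ε (b * a))
    (hn : ∀ a : R, (∀ b : R, ε (a * b) = 0) → a = 0) {n m : ℕ}
    (F : (Fin n → R) →ₗ[R] (Fin m → R)) (hF : F ≠ 0) :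
    ∃ G : (Fin m → R) →ₗ[R] (Fin n → R), CYaux.freeTr ε (F ∘ₗ G) ≠ 0 := by
  obtain ⟨x, hx⟩ : ∃ x, F x ≠ 0 := by
    by_contra h
    push_neg at h
    exact hF (LinearMap.ext fun x => by simp [h x])
  obtain ⟨i, hi⟩ : ∃ i, F (Pi.single i 1) ≠ 0 := by
    by_contra h
    push_neg at h
    apply hx
    rw [CYaux.apply_eq_sum_pi]
    simp [h]
  obtain ⟨j, hj⟩ : ∃ j, F (Pi.single i 1) j ≠ 0 := by
    by_contra h
    push_neg at h
    exact hi (funext h)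
  set a : R := F (Pi.single i 1) j with ha
  obtain ⟨b, hb⟩ : ∃ b, ε (a * b) ≠ 0 := by
    by_contra h
    push_neg at h
    exact hj (hn a h)
  let G : (Fin m → R) →ₗ[R] (Fin n → R) :=
    { toFun := fun y => (y j * b) • (Pi.single i 1 : Fin n → R)
      map_add' := fun y z => by simp [add_mul, add_smul]
      map_smul' := fun r y => by simp [mul_assoc, mul_smul] }
  refine ⟨G, ?_⟩
  have step : ∀ s : Fin m, (F ∘ₗ G) (Pi.single s 1) s = if j = s then b * a else 0 := by
    intro s
    rw [LinearMap.comp_apply]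
    show (F ((((Pi.single s 1 : Fin m → R) j) * b) • (Pi.single i 1 : Fin n → R))) s = _
    rw [map_smul]
    by_cases h : j = s
    · subst h
      simp [Pi.single_eq_same, ← ha]
    · rw [if_neg h]
      simp [Pi.single_eq_of_ne h]
  have hval : CYaux.freeTr ε (F ∘ₗ G) = ε (b * a) := by
    unfold CYaux.freeTr
    rw [Finset.sum_congr rfl fun s _ => step s, Finset.sum_ite_eq]
    simp
  rw [hval, hc]
  exact hb

end Aux

/-! ### The regular module as an object of `FGProj` -/

section Regular

variable (k A : Type u) [Field k] [Ring A] [Algebra k A]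

instance CYaux.towerRegular : IsScalarTower k Aᵐᵒᵖ A :=
  ⟨fun c m x => by
    show x * (c • m).unop = c • (x * m.unop)
    rw [MulOpposite.unop_smul, mul_smul_comm]⟩

/-- `Aᵐᵒᵖ ≃ₗ[Aᵐᵒᵖ] A` via `unop`. -/
def CYaux.opSelfEquiv : Aᵐᵒᵖ ≃ₗ[Aᵐᵒᵖ] A where
  toFun := MulOpposite.unop
  invFun := MulOpposite.op
  map_add' _ _ := rfl
  map_smul' _ _ := rfl
  left_inv _ := rfl
  right_inv _ := rfl

instance CYaux.finiteRegular : Module.Finite Aᵐᵒᵖ A :=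
  Module.Finite.equiv (CYaux.opSelfEquiv A)

instance CYaux.projectiveRegular : Module.Projective Aᵐᵒᵖ A :=
  Module.Projective.of_equiv (CYaux.opSelfEquiv A)

/-- The regular right module as a bundled f.g. projective. -/
def CYaux.regularFG : FGProj k A := { carrier := A }

variable {A}

/-- Left multiplication as an endomorphism of the regular right module. -/
def CYaux.mulL (a : A) : A →ₗ[Aᵐᵒᵖ] A where
  toFun x := a * x
  map_add' := mul_add a
  map_smul' m x := by simp [MulOpposite.smul_eq_mul_unop, mul_assoc]

theorem CYaux.mulL_mul (a b : A) : CYaux.mulL (a * b) = CYaux.mulL a ∘ₗ CYaux.mulL b :=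
  LinearMap.ext fun x => (mul_assoc a b x)

theorem CYaux.eq_mulL (f : A →ₗ[Aᵐᵒᵖ] A) : f = CYaux.mulL (f 1) := by
  refine LinearMap.ext fun x => ?_
  have := f.map_smul (MulOpposite.op x) 1
  simp only [MulOpposite.smul_eq_mul_unop, MulOpposite.unop_op, one_mul] at this
  rw [this]
  rfl

end Regular

/-- A finite-dimensional algebra over an algebraically closed field admits a
central nondegenerate linear form iff the finitely generated projective right modules admit a
Calabi–Yau family of traces. -/
theorem symmetric_iff_CY_on_projectives
    (k A : Type u) [Field k] [IsAlgClosed k] [Ring A] [Algebra k A] [FiniteDimensional k A] :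
    (∃ ε : A →ₗ[k] k, (∀ a b : A, ε (a * b) = ε (b * a)) ∧
        (∀ a : A, (∀ b : A, ε (a * b) = 0) → a = 0)) ↔
      Nonempty (CYTraces k A) := by
  constructor
  · rintro ⟨ε, hc, hn⟩
    -- transfer the form to the opposite ring
    let εR : Aᵐᵒᵖ →ₗ[k] k := ε.comp (MulOpposite.opLinearEquiv k (M := A)).symm.toLinearMap
    have hεR : ∀ x : Aᵐᵒᵖ, εR x = ε x.unop := fun x => rfl
    have hcR : ∀ x y : Aᵐᵒᵖ, εR (x * y) = εR (y * x) := fun x y => by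
      rw [hεR, hεR, MulOpposite.unop_mul, MulOpposite.unop_mul, hc]
    have hnR : ∀ x : Aᵐᵒᵖ, (∀ y : Aᵐᵒᵖ, εR (x * y) = 0) → x = 0 := by
      intro x hx
      have : x.unop = 0 := by
        refine hn x.unop fun b => ?_
        have h1 := hx (MulOpposite.op b)
        rw [hεR, MulOpposite.unop_mul, MulOpposite.unop_op] at h1
        rw [hc]
        exact h1
      exact MulOpposite.unop_injective this
    -- choose presentations
    choose n ι π hpres using fun P : FGProj k A =>
      CYaux.exists_pres (R := Aᵐᵒᵖ) (P : Type u)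
    let T : ∀ P : FGProj k A, ((P : Type u) →ₗ[Aᵐᵒᵖ] P) →ₗ[k] k := fun P =>
      { toFun := fun f => CYaux.freeTr εR (ι P ∘ₗ f ∘ₗ π P)
        map_add' := fun f g => by
          have e : ι P ∘ₗ (f + g) ∘ₗ π P = (ι P ∘ₗ f ∘ₗ π P) + (ι P ∘ₗ g ∘ₗ π P) :=
            LinearMap.ext fun x => by simp
          show CYaux.freeTr εR (ι P ∘ₗ (f + g) ∘ₗ π P)
            = CYaux.freeTr εR (ι P ∘ₗ f ∘ₗ π P) + CYaux.freeTr εR (ι P ∘ₗ g ∘ₗ π P)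
          rw [e, CYaux.freeTr_add]
        map_smul' := fun c f => by
          have e : ι P ∘ₗ (c • f) ∘ₗ π P = c • (ι P ∘ₗ f ∘ₗ π P) :=
            LinearMap.ext fun x => by
              simp only [LinearMap.comp_apply, LinearMap.smul_apply]
              rw [LinearMap.map_smul_of_tower]
          show CYaux.freeTr εR (ι P ∘ₗ (c • f) ∘ₗ π P)
            = RingHom.id k c • CYaux.freeTr εR (ι P ∘ₗ f ∘ₗ π P)
          rw [e, CYaux.freeTr_smul]
          rfl }
    have hT : ∀ (P : FGProj k A) (f : (P : Type u) →ₗ[Aᵐᵒᵖ] P),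
        T P f = CYaux.freeTr εR (ι P ∘ₗ f ∘ₗ π P) := fun P f => rfl
    have hcyc : ∀ (P Q : FGProj k A) (f : (P : Type u) →ₗ[Aᵐᵒᵖ] Q)
        (g : (Q : Type u) →ₗ[Aᵐᵒᵖ] P), T P (g ∘ₗ f) = T Q (f ∘ₗ g) := fun P Q f g => by
      rw [hT, hT]
      exact CYaux.freeTr_conj_cyclic εR hcR (ι P) (π P) (hpres P) (ι Q) (π Q) (hpres Q) f g
    have ndl : ∀ (P Q : FGProj k A) (f : (P : Type u) →ₗ[Aᵐᵒᵖ] Q), f ≠ 0 →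
        ∃ g : (Q : Type u) →ₗ[Aᵐᵒᵖ] P, T Q (f ∘ₗ g) ≠ 0 := by
      intro P Q f hf
      have hF : (ι Q ∘ₗ f ∘ₗ π P) ≠ 0 := by
        intro h0
        apply hf
        refine LinearMap.ext fun x => ?_
        have h1 : ι Q (f (π P (ι P x))) = 0 := by
          simpa using LinearMap.ext_iff.mp h0 (ι P x)
        rw [hpres P] at h1
        calc f x = π Q (ι Q (f x)) := (hpres Q _).symm
          _ = π Q 0 := by rw [h1]
          _ = 0 := map_zero _
      obtain ⟨G, hG⟩ := CYaux.freeTr_nondeg εR hcR hnR _ hF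
      refine ⟨π P ∘ₗ G ∘ₗ ι Q, ?_⟩
      rw [hT]
      have e1 : ι Q ∘ₗ (f ∘ₗ (π P ∘ₗ G ∘ₗ ι Q)) ∘ₗ π Q
          = ((ι Q ∘ₗ f ∘ₗ π P) ∘ₗ G) ∘ₗ (ι Q ∘ₗ π Q) := by
        refine LinearMap.ext fun x => ?_
        simp
      have e2 : (ι Q ∘ₗ π Q) ∘ₗ ((ι Q ∘ₗ f ∘ₗ π P) ∘ₗ G) = (ι Q ∘ₗ f ∘ₗ π P) ∘ₗ G := by
        refine LinearMap.ext fun x => ?_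
        simp [hpres Q]
      rw [e1, CYaux.freeTr_comm εR hcR, e2]
      exact hG
    refine ⟨⟨T, hcyc, ndl, fun P Q g hg => ?_⟩⟩
    obtain ⟨f, hf⟩ := ndl Q P g hg
    exact ⟨f, by rw [← hcyc P Q f g]; exact hf⟩
  · rintro ⟨T⟩
    let PA : FGProj k A := CYaux.regularFG k A
    let L : A →ₗ[k] ((PA : Type u) →ₗ[Aᵐᵒᵖ] PA) :=
      { toFun := fun a => CYaux.mulL a
        map_add' := fun a b => LinearMap.ext fun x => add_mul a b x
        map_smul' := fun c a => LinearMap.ext fun x => smul_mul_assoc c a x }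
    refine ⟨(T.t PA).comp L, fun a b => ?_, fun a ha => ?_⟩
    · show T.t PA ((CYaux.mulL (a * b) : A →ₗ[Aᵐᵒᵖ] A))
        = T.t PA ((CYaux.mulL (b * a) : A →ₗ[Aᵐᵒᵖ] A))
      rw [CYaux.mulL_mul, CYaux.mulL_mul]
      exact T.cyclic PA PA (CYaux.mulL b) (CYaux.mulL a)
    · by_contra ha0
      have hne : (CYaux.mulL a : (PA : Type u) →ₗ[Aᵐᵒᵖ] PA) ≠ 0 := by
        intro h0
        apply ha0
        have := LinearMap.ext_iff.mp h0 (1 : A)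
        simpa [CYaux.mulL] using this
      obtain ⟨g, hg⟩ := T.nondeg_left PA PA (CYaux.mulL a) hne
      let g' : A →ₗ[Aᵐᵒᵖ] A := g
      have hcomp : CYaux.mulL a ∘ₗ g' = CYaux.mulL (a * g' (1 : A)) := by
        conv_lhs => rw [CYaux.eq_mulL g']
        rw [← CYaux.mulL_mul]
      apply hg
      show T.t PA ((CYaux.mulL a ∘ₗ g' : A →ₗ[Aᵐᵒᵖ] A)) = 0
      rw [hcomp]
      exact ha (g' (1 : A))
end

section
/- Let k be an algebraically closed field and A a finite-dimensional k-algebra. Let η be a natural endomorphism of the identity functor on the category of right A-modules and set z_η := η_A(1) ∈ A, where η_A is the component of η at the right regular module A. Then z_η lies in the center Z(A), and the following are equivalent: (i) for every finitely generated projective right A-module P and every f ∈ J_P one has η_P ∘ f = 0; (ii) z_η·x = 0 for every x in the Jacobson radical Jac(A), i.e. z_η belongs to the Reynolds ideal Rey(A). -/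
universe u

/-- A natural endomorphism of the identity functor on the category of right `A`-modules
(formalised as left `Aᵐᵒᵖ`-modules). -/
structure NatEndo (A : Type u) [Ring A] : Type (u + 1) where
  app : ∀ (M : Type u) [AddCommGroup M] [Module Aᵐᵒᵖ M], M →ₗ[Aᵐᵒᵖ] M
  naturality : ∀ (M N : Type u) [AddCommGroup M] [Module Aᵐᵒᵖ M]
      [AddCommGroup N] [Module Aᵐᵒᵖ N] (h : M →ₗ[Aᵐᵒᵖ] N),
      h ∘ₗ app M = app N ∘ₗ h

/-!
Naturality along the maps `A → M`, `a ↦ m • a`, shows that `η` acts on every module `M` as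
right multiplication by `z = η_A(1)`; in particular `z` is central. If `z` kills `Jac(A)`, then
it kills `P • Jac(A)`, which for projective `P` contains the image of every `f ∈ J_P` (the radical
of a free module is its `Jac(A)`-multiple). Conversely, left multiplication by `x ∈ Jac(A)` lies
in `J_A`, and `η_A` sends it to `x z`. Since right modules are left `Aᵐᵒᵖ`-modules, both
directions use that the Jacobson radical is left-right symmetric, which follows from Jacobson's
lemma `1 - ab ∈ Aˣ ↔ 1 - ba ∈ Aˣ`.
-/

open MulOpposite

section Jacobson

variable {R : Type*} [Ring R]

/-- Jacobson's lemma, read off from `1 ∈ σ(ab) ↔ 1 ∈ σ(ba)` for the spectrum over `ℤ`. -/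
theorem isUnit_one_sub_mul_comm {a b : R} : IsUnit (1 - a * b) ↔ IsUnit (1 - b * a) := by
  simpa [spectrum.mem_iff] using (spectrum.unit_mem_mul_comm (R := ℤ) (a := a) (b := b) (r := 1)).not

theorem exists_mul_one_sub_eq_one_of_mem_jacobson {j : R} (hj : j ∈ Ring.jacobson R) :
    ∃ z, z * (1 - j) = 1 := by
  obtain ⟨z, hz⟩ := Ideal.mem_jacobson_iff.mp (Ideal.jacobson_bot (R := R) ▸ hj) (-1)
  rw [Ideal.mem_bot, sub_eq_zero] at hz
  exact ⟨z, by rw [mul_sub, mul_one, ← hz]; noncomm_ring⟩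

theorem isUnit_one_sub_of_mem_jacobson {j : R} (hj : j ∈ Ring.jacobson R) : IsUnit (1 - j) := by
  obtain ⟨z, hz⟩ := exists_mul_one_sub_eq_one_of_mem_jacobson hj
  -- the left inverse `z = 1 + z j` of `1 - j` has a left inverse itself, so it is a unit
  have hz' : z = 1 - -(z * j) := by rw [← hz]; noncomm_ring
  obtain ⟨w, hw⟩ := exists_mul_one_sub_eq_one_of_mem_jacobson
    (neg_mem (Ideal.mul_mem_left _ z hj))
  rw [← hz', left_inv_eq_right_inv hw hz] at hw
  exact ⟨⟨1 - j, z, hw, hz⟩, rfl⟩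

theorem mem_jacobson_iff_forall_isUnit_one_sub_mul {x : R} :
    x ∈ Ring.jacobson R ↔ ∀ y, IsUnit (1 - y * x) := by
  refine ⟨fun hx y => isUnit_one_sub_of_mem_jacobson (Ideal.mul_mem_left _ y hx), fun h => ?_⟩
  rw [← Ideal.jacobson_bot, Ideal.mem_jacobson_iff]
  intro y
  obtain ⟨u, hu⟩ := h (-y)
  refine ⟨↑u⁻¹, ?_⟩
  rw [Ideal.mem_bot, sub_eq_zero, ← u.inv_mul, hu]
  noncomm_ring

theorem op_mem_jacobson_iff {x : R} : op x ∈ Ring.jacobson Rᵐᵒᵖ ↔ x ∈ Ring.jacobson R := by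
  simp only [mem_jacobson_iff_forall_isUnit_one_sub_mul, op_surjective.forall, ← op_mul,
    ← op_one, ← op_sub, isUnit_op, isUnit_one_sub_mul_comm]

theorem smul_eq_zero_of_mem_jacobson {S : Type*} [AddCommGroup S] [Module R S]
    [IsSimpleModule R S] {x : R} (hx : x ∈ Ring.jacobson R) (s : S) : x • s = 0 := by
  have := Ring.jacobson_smul_top_le R S (Submodule.smul_mem_smul hx (Submodule.mem_top (x := s)))
  rwa [IsSimpleModule.jacobson_eq_bot, Submodule.mem_bot] at this

theorem smul_eq_zero_of_mem_smul_top {M : Type*} [AddCommGroup M] [Module R M] {I : Ideal R}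
    {r : R} (hr : ∀ i ∈ I, r * i = 0) {m : M} (hm : m ∈ I • (⊤ : Submodule R M)) : r • m = 0 :=
  Submodule.smul_induction_on hm (fun i hi n _ => by rw [← mul_smul, hr i hi, zero_smul])
    fun _ _ h₁ h₂ => by rw [smul_add, h₁, h₂, add_zero]

theorem Module.mem_jacobson_of_forall_simple {M : Type u} [AddCommGroup M] [Module R M] {m : M}
    (h : ∀ (S : Type u) [AddCommGroup S] [Module R S], IsSimpleModule R S →
      ∀ u : M →ₗ[R] S, u m = 0) :
    m ∈ Module.jacobson R M :=
  Submodule.mem_sInf.mpr fun N hN => by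
    simpa using h (M ⧸ N) (isSimpleModule_iff_isCoatom.mpr hN) N.mkQ

theorem Module.jacobson_finsupp_le_smul_top {ι : Type*} :
    Module.jacobson R (ι →₀ R) ≤ Ring.jacobson R • ⊤ := by
  intro x hx
  rw [← x.sum_single]
  refine Submodule.finsuppSum_mem _ _ _ _ fun a _ => ?_
  exact Submodule.map_le_smul_top _ (Finsupp.lsingle a)
    ⟨x a, Module.le_comap_jacobson (Finsupp.lapply a) hx, rfl⟩

theorem Module.Projective.jacobson_le_smul_top {P : Type*} [AddCommGroup P] [Module R P]
    [Module.Projective R P] : Module.jacobson R P ≤ Ring.jacobson R • ⊤ := by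
  obtain ⟨s, hs⟩ := Module.projective_def'.mp ‹_›
  intro p hp
  have := Submodule.smul_top_le_comap_smul_top _ (Finsupp.linearCombination R id)
    (Module.jacobson_finsupp_le_smul_top (Module.le_comap_jacobson s hp))
  rwa [Submodule.mem_comap, ← LinearMap.comp_apply, hs, LinearMap.id_apply] at this

end Jacobson

section RightModules

variable {A : Type u} [Ring A]

theorem comp_mulLeft_eq_zero_of_mem_jacobson {S : Type*} [AddCommGroup S] [Module Aᵐᵒᵖ S]
    [IsSimpleModule Aᵐᵒᵖ S] {x : A} (hx : x ∈ Ring.jacobson A) (u : A →ₗ[Aᵐᵒᵖ] S) :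
    u ∘ₗ DistribSMul.toLinearMap Aᵐᵒᵖ A x = 0 := by
  refine LinearMap.ext fun a => ?_
  have hxa : x * a = op a • op x • (1 : A) := by simp
  rw [LinearMap.comp_apply, LinearMap.zero_apply, DistribSMul.toLinearMap_apply, smul_eq_mul,
    hxa, map_smul, map_smul, smul_eq_zero_of_mem_jacobson (op_mem_jacobson_iff.mpr hx), smul_zero]

namespace NatEndo

variable (η : NatEndo A)

theorem app_apply (M : Type u) [AddCommGroup M] [Module Aᵐᵒᵖ M] (m : M) :
    η.app M m = op (η.app A 1) • m := by
  simpa using (LinearMap.congr_fun (η.naturality A M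
    (LinearMap.toSpanSingleton Aᵐᵒᵖ M m ∘ₗ (opLinearEquiv Aᵐᵒᵖ).toLinearMap)) 1).symm

theorem app_one_mem_center : η.app A 1 ∈ Subring.center A := by
  refine Subring.mem_center_iff.mpr fun a => ?_
  calc a * η.app A 1 = η.app A a := by rw [η.app_apply A a, op_smul_eq_mul]
    _ = η.app A (op a • 1) := by rw [op_smul_eq_mul, one_mul]
    _ = η.app A 1 * a := by rw [map_smul, op_smul_eq_mul]

end NatEndo

end RightModules

theorem natEndo_reynolds_characterisation_general
    (A : Type u) [Ring A]
    (η : NatEndo A) :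
    η.app A 1 ∈ Subring.center A ∧
    ((∀ (P : Type u) [AddCommGroup P] [Module Aᵐᵒᵖ P]
        [Module.Finite Aᵐᵒᵖ P] [Module.Projective Aᵐᵒᵖ P] (f : P →ₗ[Aᵐᵒᵖ] P),
        (∀ (S : Type u) [AddCommGroup S] [Module Aᵐᵒᵖ S], IsSimpleModule Aᵐᵒᵖ S →
          ∀ u : P →ₗ[Aᵐᵒᵖ] S, u ∘ₗ f = 0) →
        η.app P ∘ₗ f = 0) ↔
      (∀ x ∈ Ideal.jacobson (⊥ : Ideal A), η.app A 1 * x = 0)) := by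
  have hz := Subring.mem_center_iff.mp η.app_one_mem_center
  simp only [Ideal.jacobson_bot]
  refine ⟨η.app_one_mem_center, fun h x hx => ?_, fun h P _ _ _ _ f hf => ?_⟩
  · have : Module.Finite Aᵐᵒᵖ A := Module.Finite.equiv (opLinearEquiv Aᵐᵒᵖ).symm
    have : Module.Projective Aᵐᵒᵖ A := Module.Projective.of_equiv (opLinearEquiv Aᵐᵒᵖ).symm
    have := LinearMap.congr_fun
      (h A _ fun S _ _ _ => comp_mulLeft_eq_zero_of_mem_jacobson (S := S) hx) 1
    simpa [η.app_apply A x, hz x] using this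
  · ext p
    have hfp : f p ∈ Ring.jacobson Aᵐᵒᵖ • ⊤ := Module.Projective.jacobson_le_smul_top
      (Module.mem_jacobson_of_forall_simple fun S _ _ hS u => LinearMap.congr_fun (hf S hS u) p)
    rw [LinearMap.comp_apply, η.app_apply, LinearMap.zero_apply]
    refine smul_eq_zero_of_mem_smul_top (fun j hj => ?_) hfp
    obtain ⟨x, rfl⟩ := op_surjective j
    rw [← op_mul, hz, h x (op_mem_jacobson_iff.mp hj), op_zero]

/-- For a natural endomorphism `η` of the identity functor on right
`A`-modules, the element `z_η = η_A 1` is central, and `η` annihilates `J_P` for every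
finitely generated projective right `A`-module `P` iff `z_η` annihilates the Jacobson
radical, i.e. `z_η` lies in the Reynolds ideal. -/
theorem natEndo_reynolds_characterisation
    (k A : Type u) [Field k] [IsAlgClosed k] [Ring A] [Algebra k A] [FiniteDimensional k A]
    (η : NatEndo A) :
    η.app A 1 ∈ Subring.center A ∧
    ((∀ (P : Type u) [AddCommGroup P] [Module Aᵐᵒᵖ P]
        [Module.Finite Aᵐᵒᵖ P] [Module.Projective Aᵐᵒᵖ P] (f : P →ₗ[Aᵐᵒᵖ] P),
        (∀ (S : Type u) [AddCommGroup S] [Module Aᵐᵒᵖ S], IsSimpleModule Aᵐᵒᵖ S →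
          ∀ u : P →ₗ[Aᵐᵒᵖ] S, u ∘ₗ f = 0) →
        η.app P ∘ₗ f = 0) ↔
      (∀ x ∈ Ideal.jacobson (⊥ : Ideal A), η.app A 1 * x = 0)) :=
  natEndo_reynolds_characterisation_general A η
end

section
/- Let C be an abelian category equipped with a monoidal structure whose tensor product is additive in each variable and biexact (for every object X, the functors X ⊗ − and − ⊗ X are exact), and in which every object Y has a right dual ^*Y with evaluation ẽv_Y : Y ⊗ ^*Y → 1 and coevaluation c̃oev_Y : 1 → ^*Y ⊗ Y satisfying the zig-zag identities, where 1 is the tensor unit. Assume there exist a projective object P of C and an epimorphism p : P → 1. Let X be an object of C and let η = (η_Y : ^*Y ⊗ Y → X)_{Y ∈ C} be a dinatural transformation, i.e. for every morphism f : Y → Z one has η_Y ∘ (^*f ⊗ id_Y) = η_Z ∘ (id_{^*Z} ⊗ f) as morphisms ^*Z ⊗ Y → X. Suppose 0 → A →^f B →^g C → 0 is a short exact sequence in C and a ∈ End(A), b ∈ End(B), c ∈ End(C) satisfy f ∘ a = b ∘ f and g ∘ b = c ∘ g. Then η_B ∘ (id_{^*B} ⊗ b) ∘ c̃oev_B = η_A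 ∘ (id_{^*A} ⊗ a) ∘ c̃oev_A + η_C ∘ (id_{^*C} ⊗ c) ∘ c̃oev_C as morphisms 1 → X. -/
universe v u

/-!
After precomposing with the epimorphism `p : P ⟶ 𝟙_ C` it suffices to compare morphisms out of
the projective `P`. Tensoring `0 → A → B → C → 0` on the left with `ᘁC` and `ᘁB` gives an
epimorphism `ᘁC ⊗ B ↠ ᘁC ⊗ C` and an exact sequence `ᘁB ⊗ A ↪ ᘁB ⊗ B → ᘁB ⊗ C`. Projectivity
lifts the twisted coevaluation of `c` to `β : P ⟶ ᘁC ⊗ B`, and exactness splits the twisted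
coevaluation of `b` as `α ≫ ᘁB ◁ f + β ≫ ᘁg ▷ B`, where `α` maps to the twisted coevaluation of
`a` because `ᘁg ≫ ᘁf = ᘁ(f ≫ g) = 0`. Dinaturality moves the two summands to `ᘁA ⊗ A` and `ᘁC ⊗ C`.
-/

open CategoryTheory MonoidalCategory Limits

namespace CategoryTheory

variable {C : Type u} [Category.{v} C]

theorem monoidalPreadditive_of_additive [Preadditive C] [MonoidalCategory C]
    [∀ X : C, (tensorLeft X).Additive] [∀ X : C, (tensorRight X).Additive] :
    MonoidalPreadditive C where
  whiskerLeft_zero := (tensorLeft _).map_zero _ _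
  zero_whiskerRight := (tensorRight _).map_zero _ _
  whiskerLeft_add _ _ := (tensorLeft _).map_add
  add_whiskerRight _ _ := (tensorRight _).map_add

section Rigid

variable [MonoidalCategory C]

def twistedCoevaluation {Y : C} [HasLeftDual Y] (b : Y ⟶ Y) : 𝟙_ C ⟶ (ᘁY) ⊗ Y :=
  η_ (ᘁY) Y ≫ (ᘁY) ◁ b

theorem twistedCoevaluation_whiskerLeft {Y Z : C} [HasLeftDual Y] [HasLeftDual Z]
    {f : Y ⟶ Z} {a : Y ⟶ Y} {b : Z ⟶ Z} (h : a ≫ f = f ≫ b) :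
    twistedCoevaluation a ≫ (ᘁY) ◁ f = twistedCoevaluation b ≫ (ᘁf) ▷ Z := by
  rw [twistedCoevaluation, twistedCoevaluation, Category.assoc, Category.assoc, whisker_exchange,
    coevaluation_comp_leftAdjointMate_assoc, ← MonoidalCategory.whiskerLeft_comp,
    ← MonoidalCategory.whiskerLeft_comp, h]

@[simp]
theorem leftAdjointMate_zero [Preadditive C] [MonoidalPreadditive C] {X Y : C}
    [HasLeftDual X] [HasLeftDual Y] : (ᘁ(0 : X ⟶ Y)) = 0 := by
  simp [leftAdjointMate]

end Rigid

namespace ShortComplex.ShortExact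

variable [Abelian C] [MonoidalCategory C] [MonoidalPreadditive C]
  [∀ X : C, PreservesFiniteLimits (tensorLeft X)] [∀ X : C, PreservesFiniteColimits (tensorLeft X)]
  [∀ X : C, HasLeftDual X] {S : ShortComplex C}

theorem exists_decomposition_dual_tensor (hS : S.ShortExact) {P : C} [Projective P]
    (u₁ : P ⟶ (ᘁS.X₁) ⊗ S.X₁) (u₂ : P ⟶ (ᘁS.X₂) ⊗ S.X₂) (u₃ : P ⟶ (ᘁS.X₃) ⊗ S.X₃)
    (h₁₂ : u₂ ≫ (ᘁS.f) ▷ S.X₂ = u₁ ≫ (ᘁS.X₁) ◁ S.f)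
    (h₂₃ : u₂ ≫ (ᘁS.X₂) ◁ S.g = u₃ ≫ (ᘁS.g) ▷ S.X₃) :
    ∃ (α : P ⟶ (ᘁS.X₂) ⊗ S.X₁) (β : P ⟶ (ᘁS.X₃) ⊗ S.X₂),
      u₂ = α ≫ (ᘁS.X₂) ◁ S.f + β ≫ (ᘁS.g) ▷ S.X₂ ∧
        α ≫ (ᘁS.f) ▷ S.X₁ = u₁ ∧ β ≫ (ᘁS.X₃) ◁ S.g = u₃ := by
  obtain ⟨β, hβ⟩ : ∃ β, β ≫ (ᘁS.X₃) ◁ S.g = u₃ := by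
    have : Epi ((ᘁS.X₃) ◁ S.g) := (hS.map_of_exact (tensorLeft _)).epi_g
    exact ⟨Projective.factorThru u₃ _, Projective.factorThru_comp _ _⟩
  have hrest : (u₂ - β ≫ (ᘁS.g) ▷ S.X₂) ≫ (ᘁS.X₂) ◁ S.g = 0 := by
    rw [Preadditive.sub_comp, h₂₃, Category.assoc, ← whisker_exchange, ← Category.assoc β, hβ,
      sub_self]
  have hrow := hS.map_of_exact (tensorLeft (ᘁS.X₂))
  have := hrow.mono_f
  obtain ⟨α, hα⟩ : ∃ α, α ≫ (ᘁS.X₂) ◁ S.f = u₂ - β ≫ (ᘁS.g) ▷ S.X₂ :=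
    ⟨hrow.exact.lift _ hrest, hrow.exact.lift_f _ hrest⟩
  refine ⟨α, β, by rw [hα, sub_add_cancel], ?_, hβ⟩
  have : Mono ((ᘁS.X₁) ◁ S.f) := (hS.map_of_exact (tensorLeft _)).mono_f
  rw [← cancel_mono ((ᘁS.X₁) ◁ S.f), ← h₁₂]
  calc (α ≫ (ᘁS.f) ▷ S.X₁) ≫ (ᘁS.X₁) ◁ S.f = (α ≫ (ᘁS.X₂) ◁ S.f) ≫ (ᘁS.f) ▷ S.X₂ := by
        simp only [Category.assoc, whisker_exchange]
    _ = u₂ ≫ (ᘁS.f) ▷ S.X₂ := by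
        rw [hα, Preadditive.sub_comp, Category.assoc, ← comp_whiskerRight, ← comp_leftAdjointMate,
          S.zero, leftAdjointMate_zero, MonoidalPreadditive.zero_whiskerRight, comp_zero, sub_zero]

theorem twistedCoevaluation_comp_eq_add (hS : S.ShortExact) {P : C} [Projective P]
    (p : P ⟶ 𝟙_ C) [Epi p] {T : C} (d : ∀ Y : C, (ᘁY) ⊗ Y ⟶ T)
    (hd : ∀ {Y Z : C} (f : Y ⟶ Z), (ᘁf) ▷ Y ≫ d Y = (ᘁZ) ◁ f ≫ d Z)
    {a : S.X₁ ⟶ S.X₁} {b : S.X₂ ⟶ S.X₂} {c : S.X₃ ⟶ S.X₃}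
    (hab : a ≫ S.f = S.f ≫ b) (hbc : b ≫ S.g = S.g ≫ c) :
    twistedCoevaluation b ≫ d S.X₂ =
      twistedCoevaluation a ≫ d S.X₁ + twistedCoevaluation c ≫ d S.X₃ := by
  obtain ⟨α, β, hu₂, hα, hβ⟩ := hS.exists_decomposition_dual_tensor
    (p ≫ twistedCoevaluation a) (p ≫ twistedCoevaluation b) (p ≫ twistedCoevaluation c)
    (by rw [Category.assoc, ← twistedCoevaluation_whiskerLeft hab, Category.assoc])
    (by rw [Category.assoc, twistedCoevaluation_whiskerLeft hbc, Category.assoc])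
  rw [← cancel_epi p, Preadditive.comp_add]
  calc p ≫ twistedCoevaluation b ≫ d S.X₂
      = (α ≫ (ᘁS.X₂) ◁ S.f + β ≫ (ᘁS.g) ▷ S.X₂) ≫ d S.X₂ := by rw [← hu₂, Category.assoc]
    _ = α ≫ (ᘁS.f) ▷ S.X₁ ≫ d S.X₁ + β ≫ (ᘁS.X₃) ◁ S.g ≫ d S.X₃ := by
        rw [Preadditive.add_comp, Category.assoc, Category.assoc, hd, hd]
    _ = p ≫ twistedCoevaluation a ≫ d S.X₁ + p ≫ twistedCoevaluation c ≫ d S.X₃ := by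
        rw [← Category.assoc p, ← Category.assoc p, ← hα, ← hβ, Category.assoc, Category.assoc]

end ShortComplex.ShortExact

end CategoryTheory

/-- In an abelian monoidal category with biadditive biexact tensor product
and right duals (formalised via Mathlib's left duals `ᘁY`, whose evaluation and coevaluation
are `Y ⊗ ᘁY ⟶ 𝟙` and `𝟙 ⟶ ᘁY ⊗ Y`), assuming a projective object `P` with an epimorphism
`P ⟶ 𝟙_C`, any dinatural transformation `d` from `ᘁ(-) ⊗ (-)` to an object `T` satisfies the
additivity relation along a short exact sequence `0 → A → B → C → 0` with compatible
endomorphisms `a, b, c`. -/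
theorem dinatural_additive_on_short_exact
    (C : Type u) [Category.{v} C] [Abelian C] [MonoidalCategory C]
    [∀ X : C, (tensorLeft X).Additive] [∀ X : C, (tensorRight X).Additive]
    [∀ X : C, Limits.PreservesFiniteLimits (tensorLeft X)]
    [∀ X : C, Limits.PreservesFiniteColimits (tensorLeft X)]
    [∀ X : C, Limits.PreservesFiniteLimits (tensorRight X)]
    [∀ X : C, Limits.PreservesFiniteColimits (tensorRight X)]
    [∀ X : C, HasLeftDual X]
    (P : C) (hP : Projective P) (p : P ⟶ 𝟙_ C) [Epi p]
    (T : C)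
    (d : ∀ Y : C, (ᘁY) ⊗ Y ⟶ T)
    (hd : ∀ {Y Z : C} (f : Y ⟶ Z), (ᘁf) ▷ Y ≫ d Y = (ᘁZ) ◁ f ≫ d Z)
    (S : ShortComplex C) (hS : S.ShortExact)
    (a : S.X₁ ⟶ S.X₁) (b : S.X₂ ⟶ S.X₂) (c : S.X₃ ⟶ S.X₃)
    (hab : a ≫ S.f = S.f ≫ b) (hbc : b ≫ S.g = S.g ≫ c) :
    η_ (ᘁS.X₂) S.X₂ ≫ (ᘁS.X₂) ◁ b ≫ d S.X₂ =
      η_ (ᘁS.X₁) S.X₁ ≫ (ᘁS.X₁) ◁ a ≫ d S.X₁ +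
        η_ (ᘁS.X₃) S.X₃ ≫ (ᘁS.X₃) ◁ c ≫ d S.X₃ := by
  have := monoidalPreadditive_of_additive (C := C)
  simpa only [twistedCoevaluation, Category.assoc] using
    hS.twistedCoevaluation_comp_eq_add p d hd hab hbc
end

section
/- Let k be an algebraically closed field, A a finite-dimensional k-algebra, and t a Calabi–Yau family of traces on the finitely generated projective right A-modules. Fix a finitely generated projective right A-module R and y ∈ End_A(R). Then there exists a unique natural endomorphism η of the identity functor on the category of right A-modules such that for every finitely generated projective right A-module P and every choice of dual bases (g_i) of Hom_A(P,R) and (g^i) of Hom_A(R,P) with respect to t, one has η_P = Σ_i g^i ∘ y ∘ g_i; in particular the sum Σ_i g^i ∘ y ∘ g_i is independent of the choice of dual bases. -/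
universe u

open scoped Classical

/-!
Every morphism expands in dual bases: `v = Σ t(g_i ∘ v) gⁱ` and `u = Σ t(u ∘ gⁱ) g_i`.
Expanding `h ∘ gⁱ` and `f_j ∘ h` in this way turns both `h ∘ Σ gⁱ y g_i` and
`(Σ fʲ y f_j) ∘ h` into the same double sum, so the maps `c_P = Σ gⁱ y g_i` commute with every
morphism between finitely generated projectives. Dual bases for `P = A` exist because the trace
pairing is perfect, and `c_A` is left multiplication by `z = c_A(1)`; naturality along the maps
`a ↦ m a` gives `c_P(m) = m z`, which for `P = A` shows that `z` is central. The same argument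
shows that a natural endomorphism of the identity is right multiplication by its value at `1`.
-/

open Module

section DualBases

variable {k V W ι : Type*} [CommRing k] [AddCommGroup V] [Module k V] [AddCommGroup W]
  [Module k W] [Fintype ι] [DecidableEq ι]

theorem Module.Basis.sum_pairing_smul (B : V →ₗ[k] W →ₗ[k] k) (b : Basis ι k V) (c : ι → W)
    (hbc : ∀ i j, B (b i) (c j) = if i = j then 1 else 0) (v : V) :
    ∑ i, B v (c i) • b i = v := by
  have hrepr : ∀ j, B v (c j) = b.repr v j := fun j => by
    nth_rewrite 1 [← b.sum_repr v]
    simp only [map_sum, map_smul, LinearMap.sum_apply, LinearMap.smul_apply, hbc, smul_eq_mul,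
      mul_ite, mul_one, mul_zero, Finset.sum_ite_eq', Finset.mem_univ, if_true]
  simp only [hrepr, b.sum_repr]

end DualBases

theorem LinearMap.exists_basis_dual.{w} {K V : Type*} {W : Type w} [Field K] [AddCommGroup V]
    [Module K V] [AddCommGroup W] [Module K W] [FiniteDimensional K W] (B : V →ₗ[K] W →ₗ[K] K)
    [B.IsPerfPair] :
    ∃ (ι : Type w) (_ : Fintype ι) (c : Basis ι K W) (b : Basis ι K V),
      ∀ i j, B (b i) (c j) = if i = j then 1 else 0 := by
  let c := Basis.ofVectorSpace K W
  refine ⟨_, FiniteDimensional.fintypeBasisIndex c, c, c.dualBasis.map B.toPerfPair.symm,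
    fun i j => ?_⟩
  simp [Finsupp.single_apply, eq_comm]

section Composition

variable {S M N P ι : Type*} [Semiring S] [AddCommMonoid M] [Module S M] [AddCommMonoid N]
  [Module S N] [AddCommMonoid P] [Module S P]

theorem LinearMap.finsetSum_comp (s : Finset ι) (f : ι → N →ₗ[S] P) (g : M →ₗ[S] N) :
    (∑ i ∈ s, f i) ∘ₗ g = ∑ i ∈ s, f i ∘ₗ g :=
  map_sum (LinearMap.lcomp ℕ P g) f s

theorem LinearMap.comp_finsetSum (s : Finset ι) (g : N →ₗ[S] P) (f : ι → M →ₗ[S] N) :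
    g ∘ₗ (∑ i ∈ s, f i) = ∑ i ∈ s, g ∘ₗ f i :=
  map_sum (LinearMap.compRight ℕ g) f s

end Composition

section TracePairing

variable {k S P Q R : Type*} [CommRing k] [Ring S] [Algebra k S]
  [AddCommGroup P] [Module k P] [Module S P] [IsScalarTower k S P]
  [AddCommGroup Q] [Module k Q] [Module S Q] [IsScalarTower k S Q]
  [AddCommGroup R] [Module k R] [Module S R] [IsScalarTower k S R]
  (τ : (R →ₗ[S] R) →ₗ[k] k)

def tracePairing : (R →ₗ[S] P) →ₗ[k] (P →ₗ[S] R) →ₗ[k] k :=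
  LinearMap.mk₂ k (fun v u => τ (u ∘ₗ v))
    (fun _ _ _ => by simp only [LinearMap.comp_add, map_add])
    (fun _ _ _ => by simp only [LinearMap.comp_smul, map_smul])
    (fun _ _ _ => by simp only [LinearMap.add_comp, map_add])
    (fun _ _ _ => by simp only [LinearMap.smul_comp, map_smul])

@[simp]
theorem tracePairing_apply (v : R →ₗ[S] P) (u : P →ₗ[S] R) :
    tracePairing τ v u = τ (u ∘ₗ v) :=
  rfl

variable {ι κ : Type*} [Fintype ι] [DecidableEq ι] [Fintype κ] [DecidableEq κ]

def IsTraceDual (g : ι → (P →ₗ[S] R)) (g' : ι → (R →ₗ[S] P)) : Prop :=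
  ∀ i j, τ (g j ∘ₗ g' i) = if i = j then 1 else 0

variable {τ}

theorem IsTraceDual.sum_smul_right {g : ι → (P →ₗ[S] R)} {g' : Basis ι k (R →ₗ[S] P)}
    (hg : IsTraceDual τ g g') (v : R →ₗ[S] P) : ∑ i, τ (g i ∘ₗ v) • g' i = v :=
  g'.sum_pairing_smul (tracePairing τ) g hg v

theorem IsTraceDual.sum_smul_left {g : Basis ι k (P →ₗ[S] R)} {g' : ι → (R →ₗ[S] P)}
    (hg : IsTraceDual τ g g') (u : P →ₗ[S] R) : ∑ i, τ (u ∘ₗ g' i) • g i = u :=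
  g.sum_pairing_smul (tracePairing τ).flip g' (fun i j => by simpa [eq_comm] using hg j i) u

def casimir (y : R →ₗ[S] R) (g : ι → (P →ₗ[S] R)) (g' : ι → (R →ₗ[S] P)) : P →ₗ[S] P :=
  ∑ i, g' i ∘ₗ y ∘ₗ g i

theorem comp_casimir (y : R →ₗ[S] R) {g : Basis ι k (P →ₗ[S] R)} {g' : ι → (R →ₗ[S] P)}
    (hg : IsTraceDual τ g g') {f : κ → (Q →ₗ[S] R)} {f' : Basis κ k (R →ₗ[S] Q)}
    (hf : IsTraceDual τ f f') (h : P →ₗ[S] Q) :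
    h ∘ₗ casimir y g g' = casimir y f f' ∘ₗ h := by
  calc h ∘ₗ casimir y g g'
      = ∑ i, (h ∘ₗ g' i) ∘ₗ y ∘ₗ g i := by
        simp only [casimir, LinearMap.comp_finsetSum, LinearMap.comp_assoc]
    _ = ∑ i, ∑ j, τ (f j ∘ₗ h ∘ₗ g' i) • f' j ∘ₗ y ∘ₗ g i := by
        refine Finset.sum_congr rfl fun i _ => ?_
        conv_lhs => rw [← hf.sum_smul_right (h ∘ₗ g' i)]
        simp only [LinearMap.finsetSum_comp, LinearMap.smul_comp]
    _ = ∑ j, ∑ i, τ ((f j ∘ₗ h) ∘ₗ g' i) • f' j ∘ₗ y ∘ₗ g i := Finset.sum_comm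
    _ = ∑ j, (f' j ∘ₗ y) ∘ₗ f j ∘ₗ h := by
        refine Finset.sum_congr rfl fun j _ => ?_
        conv_rhs => rw [← hg.sum_smul_left (f j ∘ₗ h)]
        simp only [LinearMap.comp_finsetSum, LinearMap.comp_smul, LinearMap.comp_assoc]
    _ = casimir y f f' ∘ₗ h := by
        simp only [casimir, LinearMap.finsetSum_comp, LinearMap.comp_assoc]

theorem casimir_apply_eq_smul (y : R →ₗ[S] R) {b : Basis ι k (S →ₗ[S] R)}
    {b' : ι → (R →ₗ[S] S)} (hb : IsTraceDual τ b b') {f : κ → (Q →ₗ[S] R)}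
    {f' : Basis κ k (R →ₗ[S] Q)} (hf : IsTraceDual τ f f') (m : Q) :
    casimir y f f' m = casimir y b b' 1 • m := by
  have := LinearMap.congr_fun (comp_casimir y hb hf (LinearMap.toSpanSingleton S Q m)) 1
  simpa using this.symm

end TracePairing

section CalabiYau

variable {k A : Type u} [Field k] [Ring A] [Algebra k A] [FiniteDimensional k A]

instance FGProj.finiteDimensional (P : FGProj k A) : FiniteDimensional k P :=
  Module.Finite.trans Aᵐᵒᵖ P

theorem CYTraces.isPerfPair_tracePairing (t : CYTraces k A) (P R : FGProj k A) :
    (tracePairing (t.t R) : ((R : Type u) →ₗ[Aᵐᵒᵖ] P) →ₗ[k] _).IsPerfPair := by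
  refine .of_injective ?_ ?_ <;> refine (injective_iff_map_eq_zero _).mpr fun φ hφ => ?_ <;>
    by_contra hne
  · obtain ⟨f, hf⟩ := t.nondeg_right P R φ hne
    exact hf (LinearMap.congr_fun hφ f)
  · obtain ⟨g, hg⟩ := t.nondeg_left P R φ hne
    exact hg (LinearMap.congr_fun hφ g)

theorem CYTraces.exists_isTraceDual (t : CYTraces k A) (P R : FGProj k A) :
    ∃ (ι : Type u) (_ : Fintype ι) (g : Basis ι k ((P : Type u) →ₗ[Aᵐᵒᵖ] R))
      (g' : Basis ι k ((R : Type u) →ₗ[Aᵐᵒᵖ] P)), IsTraceDual (t.t R) g g' :=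
  have := t.isPerfPair_tracePairing P R
  (tracePairing (t.t R)).exists_basis_dual

end CalabiYau

namespace NatEndo

variable {A : Type u} [Ring A]

def ofCentral (z : Aᵐᵒᵖ) (hz : z ∈ Set.center Aᵐᵒᵖ) : NatEndo A where
  app M _ _ :=
    { toFun := (z • ·)
      map_add' := smul_add z
      map_smul' a m := by
        rw [RingHom.id_apply, smul_smul, smul_smul, Semigroup.mem_center_iff.mp hz] }
  naturality _ _ _ _ _ _ h := LinearMap.ext fun m => h.map_smul z m

theorem app_apply_eq_smul (η : NatEndo A) (M : Type u) [AddCommGroup M] [Module Aᵐᵒᵖ M]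
    (m : M) : η.app M m = η.app Aᵐᵒᵖ 1 • m := by
  have := LinearMap.congr_fun (η.naturality _ _ (LinearMap.toSpanSingleton Aᵐᵒᵖ M m)) 1
  simpa using this.symm

theorem ext_of_app_regular {η η' : NatEndo A} (h : η.app Aᵐᵒᵖ = η'.app Aᵐᵒᵖ) : η = η' := by
  obtain ⟨app, naturality⟩ := η
  obtain ⟨app', naturality'⟩ := η'
  congr
  funext M _ _
  ext m
  rw [app_apply_eq_smul ⟨app, naturality⟩, app_apply_eq_smul ⟨app', naturality'⟩]
  exact congrArg (· • m) (LinearMap.congr_fun h 1)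

end NatEndo

theorem exists_unique_natEndo_of_dual_bases_general
    (k A : Type u) [Field k] [Ring A] [Algebra k A] [FiniteDimensional k A]
    (t : CYTraces k A) (R : FGProj k A) (y : (R : Type u) →ₗ[Aᵐᵒᵖ] R) :
    ∃! η : NatEndo A,
      ∀ (P : FGProj k A) (ι : Type u) [Fintype ι]
        (g : Module.Basis ι k ((P : Type u) →ₗ[Aᵐᵒᵖ] R)) (g' : Module.Basis ι k ((R : Type u) →ₗ[Aᵐᵒᵖ] P)),
        (∀ i j, t.t R (g j ∘ₗ g' i) = if i = j then 1 else 0) →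
        η.app P = ∑ i, g' i ∘ₗ y ∘ₗ g i := by
  let Λ : FGProj k A := ⟨Aᵐᵒᵖ⟩
  obtain ⟨ι, _, b, b', hb⟩ := t.exists_isTraceDual Λ R
  set z : Aᵐᵒᵖ := casimir y b b' 1
  have hz : z ∈ Set.center Aᵐᵒᵖ := Semigroup.mem_center_iff.mpr fun a => by
    have hlinear : casimir y b b' a = a * z := by simpa using (casimir y b b').map_smul a 1
    rw [← hlinear, ← smul_eq_mul, casimir_apply_eq_smul y hb hb a]
  have hcasimir : ∀ (P : FGProj k A) (ι : Type u) [Fintype ι]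
      (g : Basis ι k ((P : Type u) →ₗ[Aᵐᵒᵖ] R)) (g' : Basis ι k ((R : Type u) →ₗ[Aᵐᵒᵖ] P)),
      IsTraceDual (t.t R) g g' → (NatEndo.ofCentral z hz).app P = casimir y g g' :=
    fun _ _ _ _ _ hg => LinearMap.ext fun m => (casimir_apply_eq_smul y hb hg m).symm
  refine ⟨NatEndo.ofCentral z hz, hcasimir, fun η hη => NatEndo.ext_of_app_regular ?_⟩
  exact (hη Λ ι b b' hb).trans (hcasimir Λ ι b b' hb).symm

/-- Given a Calabi–Yau family of traces `t` on the finitely generated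
projective right `A`-modules, a f.g. projective `R` and `y ∈ End_A(R)`, there is a unique
natural endomorphism `η` of the identity functor whose component at every f.g. projective `P`
equals `Σ_i gⁱ ∘ y ∘ g_i` for every choice of dual bases `(g_i)` of `Hom(P,R)` and `(gⁱ)` of
`Hom(R,P)` with respect to `t`. -/
theorem exists_unique_natEndo_of_dual_bases
    (k A : Type u) [Field k] [IsAlgClosed k] [Ring A] [Algebra k A] [FiniteDimensional k A]
    (t : CYTraces k A) (R : FGProj k A) (y : (R : Type u) →ₗ[Aᵐᵒᵖ] R) :
    ∃! η : NatEndo A,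
      ∀ (P : FGProj k A) (ι : Type u) [Fintype ι]
        (g : Module.Basis ι k ((P : Type u) →ₗ[Aᵐᵒᵖ] R)) (g' : Module.Basis ι k ((R : Type u) →ₗ[Aᵐᵒᵖ] P)),
        (∀ i j, t.t R (g j ∘ₗ g' i) = if i = j then 1 else 0) →
        η.app P = ∑ i, g' i ∘ₗ y ∘ₗ g i :=
  exists_unique_natEndo_of_dual_bases_general k A t R y
end

section
/- Let k be an algebraically closed field, A a finite-dimensional k-algebra, and t a Calabi–Yau family of traces on the finitely generated projective right A-modules; for a finitely generated projective R and y ∈ End_A(R) let τ_R(y)_P := Σ_i g^i ∘ y ∘ g_i ∈ End_A(P), computed from any dual bases (g_i) of Hom_A(P,R) and (g^i) of Hom_A(R,P). Then for all finitely generated projective right A-modules R, S and all A-linear maps a : S → R and b : R → S one has τ_R(a ∘ b)_P = τ_S(b ∘ a)_P for every finitely generated projective right A-module P. -/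
universe u

open scoped Classical

/-
Dual bases give the expansions `x = ∑ⱼ t_S (x ∘ h'ⱼ) • hⱼ` for `x : P → S` and
`y = ∑ᵢ t_R (gᵢ ∘ y) • g'ᵢ` for `y : R → P`. Expanding `b ∘ gᵢ` on the left-hand side and
`h'ⱼ ∘ b` on the right-hand side turns both into double sums of multiples of `g'ᵢ ∘ a ∘ hⱼ`,
with coefficients `t_S (b ∘ gᵢ ∘ h'ⱼ)` and `t_R (gᵢ ∘ h'ⱼ ∘ b)`; these agree by cyclicity of `t`.
-/

theorem Module.Basis.sum_dual_apply_smul {R M ι : Type*} [Semiring R] [AddCommMonoid M]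
    [Module R M] [Fintype ι] [DecidableEq ι] (e : Module.Basis ι R M) (f : ι → M →ₗ[R] R)
    (hf : ∀ i j, f i (e j) = if i = j then 1 else 0) (x : M) :
    ∑ i, f i x • e i = x := by
  have hcoord : ∀ i, f i = e.coord i := fun i ↦
    e.ext fun j ↦ by simp [hf, Finsupp.single_apply, eq_comm]
  simp only [hcoord, Module.Basis.coord_apply]
  exact e.sum_repr x

namespace CYTraces

variable {k A : Type u} [Field k] [Ring A] [Algebra k A] (t : CYTraces k A) {P Q : FGProj k A}
  {ι : Type*} [Fintype ι] [DecidableEq ι]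

theorem sum_trace_comp_smul_right (h : Module.Basis ι k ((P : Type u) →ₗ[Aᵐᵒᵖ] Q))
    (h' : ι → (Q : Type u) →ₗ[Aᵐᵒᵖ] P) (hh : ∀ i j, t.t Q (h j ∘ₗ h' i) = if i = j then 1 else 0)
    (x : (P : Type u) →ₗ[Aᵐᵒᵖ] Q) :
    ∑ j, t.t Q (x ∘ₗ h' j) • h j = x :=
  h.sum_dual_apply_smul (fun j ↦ t.t Q ∘ₗ LinearMap.lcomp k Q (h' j))
    (fun i j ↦ by simpa [LinearMap.lcomp_apply'] using hh i j) x

theorem sum_trace_comp_smul_left (g : ι → (P : Type u) →ₗ[Aᵐᵒᵖ] Q)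
    (g' : Module.Basis ι k ((Q : Type u) →ₗ[Aᵐᵒᵖ] P))
    (hg : ∀ i j, t.t Q (g j ∘ₗ g' i) = if i = j then 1 else 0)
    (y : (Q : Type u) →ₗ[Aᵐᵒᵖ] P) :
    ∑ i, t.t Q (g i ∘ₗ y) • g' i = y :=
  g'.sum_dual_apply_smul (fun i ↦ t.t Q ∘ₗ LinearMap.compRight k (g i))
    (fun i j ↦ by simpa [eq_comm] using hg j i) y

end CYTraces

theorem tau_comm_general
    (k A : Type u) [Field k] [Ring A] [Algebra k A]
    (t : CYTraces k A) (R S P : FGProj k A)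
    (a : (S : Type u) →ₗ[Aᵐᵒᵖ] R) (b : (R : Type u) →ₗ[Aᵐᵒᵖ] S)
    (ι κ : Type u) [Fintype ι] [Fintype κ]
    (g : Module.Basis ι k ((P : Type u) →ₗ[Aᵐᵒᵖ] R)) (g' : Module.Basis ι k ((R : Type u) →ₗ[Aᵐᵒᵖ] P))
    (hg : ∀ i j, t.t R (g j ∘ₗ g' i) = if i = j then 1 else 0)
    (h : Module.Basis κ k ((P : Type u) →ₗ[Aᵐᵒᵖ] S)) (h' : Module.Basis κ k ((S : Type u) →ₗ[Aᵐᵒᵖ] P))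
    (hh : ∀ i j, t.t S (h j ∘ₗ h' i) = if i = j then 1 else 0) :
    ∑ i, g' i ∘ₗ (a ∘ₗ b) ∘ₗ g i = ∑ j, h' j ∘ₗ (b ∘ₗ a) ∘ₗ h j := by
  calc ∑ i, g' i ∘ₗ (a ∘ₗ b) ∘ₗ g i
      = ∑ i, ∑ j, t.t S ((b ∘ₗ g i) ∘ₗ h' j) • (g' i ∘ₗ a ∘ₗ h j) := by
        refine Finset.sum_congr rfl fun i _ ↦ ?_
        have expand := congrArg (LinearMap.compRight k (g' i ∘ₗ a))
          (t.sum_trace_comp_smul_right h h' hh (b ∘ₗ g i))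
        simp only [map_sum, map_smul, LinearMap.compRight_apply] at expand
        exact expand.symm
    _ = ∑ j, ∑ i, t.t R (g i ∘ₗ (h' j ∘ₗ b)) • (g' i ∘ₗ a ∘ₗ h j) := by
        rw [Finset.sum_comm]
        exact Finset.sum_congr rfl fun j _ ↦ Finset.sum_congr rfl fun i _ ↦
          congrArg (· • _) (t.cyclic S R (g i ∘ₗ h' j) b)
    _ = ∑ j, h' j ∘ₗ (b ∘ₗ a) ∘ₗ h j := by
        refine Finset.sum_congr rfl fun j _ ↦ ?_
        have expand := congrArg (LinearMap.lcomp k P (a ∘ₗ h j))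
          (t.sum_trace_comp_smul_left g g' hg (h' j ∘ₗ b))
        simp only [map_sum, map_smul, LinearMap.lcomp_apply'] at expand
        exact expand

/-- For a Calabi–Yau family of traces `t` on the f.g. projective right
`A`-modules, the operation `τ` satisfies `τ_R(a ∘ b)_P = τ_S(b ∘ a)_P`: for all f.g.
projectives `P, R, S`, maps `a : S → R`, `b : R → S`, and dual bases `(g, g')` for the pair
`(P, R)` and `(h, h')` for the pair `(P, S)` with respect to `t`, the corresponding sums
agree. -/
theorem tau_comm
    (k A : Type u) [Field k] [IsAlgClosed k] [Ring A] [Algebra k A] [FiniteDimensional k A]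
    (t : CYTraces k A) (R S P : FGProj k A)
    (a : (S : Type u) →ₗ[Aᵐᵒᵖ] R) (b : (R : Type u) →ₗ[Aᵐᵒᵖ] S)
    (ι κ : Type u) [Fintype ι] [Fintype κ]
    (g : Module.Basis ι k ((P : Type u) →ₗ[Aᵐᵒᵖ] R)) (g' : Module.Basis ι k ((R : Type u) →ₗ[Aᵐᵒᵖ] P))
    (hg : ∀ i j, t.t R (g j ∘ₗ g' i) = if i = j then 1 else 0)
    (h : Module.Basis κ k ((P : Type u) →ₗ[Aᵐᵒᵖ] S)) (h' : Module.Basis κ k ((S : Type u) →ₗ[Aᵐᵒᵖ] P))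
    (hh : ∀ i j, t.t S (h j ∘ₗ h' i) = if i = j then 1 else 0) :
    ∑ i, g' i ∘ₗ (a ∘ₗ b) ∘ₗ g i = ∑ j, h' j ∘ₗ (b ∘ₗ a) ∘ₗ h j :=
  tau_comm_general k A t R S P a b ι κ g g' hg h h' hh
end

section
/- Let k be an algebraically closed field, A a finite-dimensional k-algebra, and t a Calabi–Yau family of traces on the finitely generated projective right A-modules; for a finitely generated projective R and y ∈ End_A(R) let τ_R(y)_P := Σ_i g^i ∘ y ∘ g_i ∈ End_A(P), computed from any dual bases (g_i) of Hom_A(P,R) and (g^i) of Hom_A(R,P). Let G be a finitely generated projective right A-module such that every finitely generated projective right A-module is a direct summand of G^{⊕m} for some m ≥ 1 (for example G = A). Then for every finitely generated projective right A-module R and every y ∈ End_A(R) there exists h ∈ End_A(G) such that τ_R(y)_P = τ_G(h)_P for every finitely generated projective right A-module P. (That is, the Higman ideal equals the image of τ_G.) -/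
universe u

open scoped Classical

/-!
The sum `τ(y) = ∑ i, g'ᵢ ∘ y ∘ gᵢ` over dual bases behaves like a trace:
`τ_Q(a ∘ y ∘ b) = τ_R(y ∘ b ∘ a)` for `a : R → Q`, `b : Q → R`. Indeed, expanding `u'ⱼ ∘ a` in the
basis `g'` produces the coefficients `t_R(gᵢ ∘ u'ⱼ ∘ a) = t_Q(a ∘ gᵢ ∘ u'ⱼ)`, which by cyclicity are
the coordinates of `a ∘ gᵢ` in the basis `u`. Now write `R` as a summand of `Gⁿ` via `p ∘ i = id`,
with projections `πₛ` and inclusions `σₛ`. Then `y = ∑ₛ (y ∘ p ∘ σₛ) ∘ (πₛ ∘ i)`, so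
`τ_R(y) = ∑ₛ τ_G(πₛ ∘ i ∘ y ∘ p ∘ σₛ) = τ_G(h)`.
-/

namespace LinearMap

variable {S M N O : Type*} [Semiring S] [AddCommMonoid M] [AddCommMonoid N] [AddCommMonoid O]
  [Module S M] [Module S N] [Module S O] {ι : Type*}

theorem finsetSum_comp_s12 (s : Finset ι) (f : ι → N →ₗ[S] O) (g : M →ₗ[S] N) :
    (∑ i ∈ s, f i) ∘ₗ g = ∑ i ∈ s, f i ∘ₗ g := by
  ext; simp

theorem comp_finsetSum_s12 (s : Finset ι) (f : ι → M →ₗ[S] N) (g : N →ₗ[S] O) :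
    g ∘ₗ (∑ i ∈ s, f i) = ∑ i ∈ s, g ∘ₗ f i := by
  ext; simp

end LinearMap

/-- For dual bases `g` of `Hom_A(P, R)` and `f` of `Hom_A(R, P)`, `tau f g y` is the paper's
`τ_R(y)_P`. -/
def tau {S M N : Type*} [Semiring S] [AddCommMonoid M] [AddCommMonoid N] [Module S M] [Module S N]
    {ι : Type*} [Fintype ι] (f : ι → N →ₗ[S] M) (g : ι → M →ₗ[S] N) :
    (N →ₗ[S] N) →+ (M →ₗ[S] M) where
  toFun y := ∑ i, f i ∘ₗ y ∘ₗ g i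
  map_zero' := by simp
  map_add' y z := by simp [LinearMap.add_comp, LinearMap.comp_add, Finset.sum_add_distrib]

namespace CYTraces

variable {k A : Type u} [Field k] [Ring A] [Algebra k A] (t : CYTraces k A)
  {P Q R : FGProj k A} {ι κ : Type*} [Fintype ι] [Fintype κ]

theorem trace_comp_dual_eq_repr (b : Module.Basis ι k ((P : Type u) →ₗ[Aᵐᵒᵖ] Q))
    (b' : ι → (Q : Type u) →ₗ[Aᵐᵒᵖ] P) (hd : ∀ i j, t.t Q (b j ∘ₗ b' i) = if i = j then 1 else 0)
    (f : (P : Type u) →ₗ[Aᵐᵒᵖ] Q) (i : ι) :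
    t.t Q (f ∘ₗ b' i) = b.repr f i := by
  conv_lhs => rw [← b.sum_repr f]
  simp only [LinearMap.finsetSum_comp_s12, LinearMap.smul_comp, map_sum, map_smul, hd, smul_eq_mul,
    mul_ite, mul_one, mul_zero, Fintype.sum_ite_eq]

theorem trace_dual_comp_eq_repr (b : ι → (P : Type u) →ₗ[Aᵐᵒᵖ] Q)
    (b' : Module.Basis ι k ((Q : Type u) →ₗ[Aᵐᵒᵖ] P))
    (hd : ∀ i j, t.t Q (b j ∘ₗ b' i) = if i = j then 1 else 0)
    (f : (Q : Type u) →ₗ[Aᵐᵒᵖ] P) (i : ι) :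
    t.t Q (b i ∘ₗ f) = b'.repr f i := by
  conv_lhs => rw [← b'.sum_repr f]
  simp only [LinearMap.comp_finsetSum_s12, LinearMap.comp_smul, map_sum, map_smul, hd, smul_eq_mul,
    mul_ite, mul_one, mul_zero, Fintype.sum_ite_eq']

theorem tau_comp_comm (g : ι → (P : Type u) →ₗ[Aᵐᵒᵖ] R)
    (g' : Module.Basis ι k ((R : Type u) →ₗ[Aᵐᵒᵖ] P))
    (hg : ∀ i j, t.t R (g j ∘ₗ g' i) = if i = j then 1 else 0)
    (u : Module.Basis κ k ((P : Type u) →ₗ[Aᵐᵒᵖ] Q)) (u' : κ → (Q : Type u) →ₗ[Aᵐᵒᵖ] P)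
    (hu : ∀ i j, t.t Q (u j ∘ₗ u' i) = if i = j then 1 else 0)
    (a : (R : Type u) →ₗ[Aᵐᵒᵖ] Q) (b : (Q : Type u) →ₗ[Aᵐᵒᵖ] R) (y : (R : Type u) →ₗ[Aᵐᵒᵖ] R) :
    tau u' u (a ∘ₗ y ∘ₗ b) = tau g' g (y ∘ₗ b ∘ₗ a) := by
  set c : ι → κ → k := fun i j => t.t R (g i ∘ₗ u' j ∘ₗ a)
  have expand_u'a : ∀ j, u' j ∘ₗ a = ∑ i, c i j • g' i := fun j => by
    simp only [c, t.trace_dual_comp_eq_repr g g' hg, g'.sum_repr]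
  have expand_ag : ∀ i, ∑ j, c i j • u j = a ∘ₗ g i := fun i => by
    have hc : ∀ j, c i j = u.repr (a ∘ₗ g i) j := fun j =>
      (t.cyclic R Q a (g i ∘ₗ u' j)).trans (t.trace_comp_dual_eq_repr u u' hu (a ∘ₗ g i) j)
    simp only [hc, u.sum_repr]
  calc tau u' u (a ∘ₗ y ∘ₗ b)
      = ∑ j, (u' j ∘ₗ a) ∘ₗ y ∘ₗ b ∘ₗ u j := rfl
    _ = ∑ j, ∑ i, c i j • (g' i ∘ₗ y ∘ₗ b ∘ₗ u j) := by
      simp only [expand_u'a, LinearMap.finsetSum_comp_s12, LinearMap.smul_comp]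
    _ = ∑ i, g' i ∘ₗ y ∘ₗ b ∘ₗ ∑ j, c i j • u j := by
      rw [Finset.sum_comm]
      simp only [LinearMap.comp_finsetSum_s12, LinearMap.comp_smul]
    _ = tau g' g (y ∘ₗ b ∘ₗ a) := by
      simp only [expand_ag]; rfl

end CYTraces

theorem higman_eq_image_tauG_general
    (k A : Type u) [Field k] [Ring A] [Algebra k A]
    (t : CYTraces k A) (G : FGProj k A)
    (hG : ∀ P : FGProj k A, ∃ m : ℕ, 1 ≤ m ∧
      ∃ (i : (P : Type u) →ₗ[Aᵐᵒᵖ] (Fin m → G)) (p : (Fin m → (G : Type u)) →ₗ[Aᵐᵒᵖ] P),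
        p ∘ₗ i = LinearMap.id)
    (R : FGProj k A) (y : (R : Type u) →ₗ[Aᵐᵒᵖ] R) :
    ∃ h : (G : Type u) →ₗ[Aᵐᵒᵖ] G,
      ∀ (P : FGProj k A) (ι κ : Type u) [Fintype ι] [Fintype κ]
        (g : Module.Basis ι k ((P : Type u) →ₗ[Aᵐᵒᵖ] R)) (g' : Module.Basis ι k ((R : Type u) →ₗ[Aᵐᵒᵖ] P)),
        (∀ i j, t.t R (g j ∘ₗ g' i) = if i = j then 1 else 0) →
        ∀ (u : Module.Basis κ k ((P : Type u) →ₗ[Aᵐᵒᵖ] G)) (u' : Module.Basis κ k ((G : Type u) →ₗ[Aᵐᵒᵖ] P)),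
        (∀ i j, t.t G (u j ∘ₗ u' i) = if i = j then 1 else 0) →
        ∑ i, g' i ∘ₗ y ∘ₗ g i = ∑ j, u' j ∘ₗ h ∘ₗ u j := by
  obtain ⟨n, -, i, p, hpi⟩ := hG R
  let π (s : Fin n) : (Fin n → (G : Type u)) →ₗ[Aᵐᵒᵖ] G := LinearMap.proj s
  let σ (s : Fin n) : (G : Type u) →ₗ[Aᵐᵒᵖ] (Fin n → G) := LinearMap.single Aᵐᵒᵖ (fun _ => G) s
  have hσπ : ∑ s, σ s ∘ₗ π s = LinearMap.id :=
    (LinearMap.lsum_apply Aᵐᵒᵖ _ ℕ σ).symm.trans (LinearMap.lsum_single Aᵐᵒᵖ _ ℕ)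
  refine ⟨∑ s, (π s ∘ₗ i) ∘ₗ y ∘ₗ (p ∘ₗ σ s), fun P ι κ _ _ g g' hg u u' hu => ?_⟩
  calc tau g' g y
      = tau g' g (y ∘ₗ p ∘ₗ (∑ s, σ s ∘ₗ π s) ∘ₗ i) := by
        rw [hσπ, LinearMap.id_comp, hpi, LinearMap.comp_id]
    _ = ∑ s, tau g' g (y ∘ₗ (p ∘ₗ σ s) ∘ₗ (π s ∘ₗ i)) := by
        simp only [LinearMap.finsetSum_comp_s12, LinearMap.comp_finsetSum_s12, map_sum]; rfl
    _ = ∑ s, tau u' u ((π s ∘ₗ i) ∘ₗ y ∘ₗ (p ∘ₗ σ s)) := by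
        simp only [t.tau_comp_comm g g' hg u u' hu]
    _ = tau u' u (∑ s, (π s ∘ₗ i) ∘ₗ y ∘ₗ (p ∘ₗ σ s)) := (map_sum _ _ _).symm

/-- Let `t` be a Calabi–Yau family of traces on the f.g. projective right
`A`-modules and let `G` be a f.g. projective module such that every f.g. projective is a
direct summand of some `G^{⊕m}`. Then for every f.g. projective `R` and `y ∈ End_A(R)` there
is `h ∈ End_A(G)` with `τ_R(y) = τ_G(h)`, where the components of `τ` are expressed through
arbitrary dual bases: the Higman ideal is the image of `τ_G`. -/
theorem higman_eq_image_tauG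
    (k A : Type u) [Field k] [IsAlgClosed k] [Ring A] [Algebra k A] [FiniteDimensional k A]
    (t : CYTraces k A) (G : FGProj k A)
    (hG : ∀ P : FGProj k A, ∃ m : ℕ, 1 ≤ m ∧
      ∃ (i : (P : Type u) →ₗ[Aᵐᵒᵖ] (Fin m → G)) (p : (Fin m → (G : Type u)) →ₗ[Aᵐᵒᵖ] P),
        p ∘ₗ i = LinearMap.id)
    (R : FGProj k A) (y : (R : Type u) →ₗ[Aᵐᵒᵖ] R) :
    ∃ h : (G : Type u) →ₗ[Aᵐᵒᵖ] G,
      ∀ (P : FGProj k A) (ι κ : Type u) [Fintype ι] [Fintype κ]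
        (g : Module.Basis ι k ((P : Type u) →ₗ[Aᵐᵒᵖ] R)) (g' : Module.Basis ι k ((R : Type u) →ₗ[Aᵐᵒᵖ] P)),
        (∀ i j, t.t R (g j ∘ₗ g' i) = if i = j then 1 else 0) →
        ∀ (u : Module.Basis κ k ((P : Type u) →ₗ[Aᵐᵒᵖ] G)) (u' : Module.Basis κ k ((G : Type u) →ₗ[Aᵐᵒᵖ] P)),
        (∀ i j, t.t G (u j ∘ₗ u' i) = if i = j then 1 else 0) →
        ∑ i, g' i ∘ₗ y ∘ₗ g i = ∑ j, u' j ∘ₗ h ∘ₗ u j :=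
  higman_eq_image_tauG_general k A t G hG R y
end
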